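/- arXiv:2103.00282 — 6 statements merged into one kernel-verified Lean document; each statement's English description precedes it below -/
import Mathlib

section
/- For every prime p and all integers k ≥ 1 and m ≥ 1, the number of elements x of the ring ℤ/p^kℤ satisfying x^m = 0 equals p^{k − ⌈k/m⌉}. -/
theorem stmt4 (p : ℕ) (hp : p.Prime) (k m : ℕ) (hk : 1 ≤ k) (hm : 1 ≤ m) :
    Nat.card {x : ZMod (p ^ k) // x ^ m = 0} = p ^ (k - (k + m - 1) / m) := by
  haveI : Fact p.Prime := ⟨hp⟩
  set c := (k + m - 1) / m with hc
  have hm0 : 0 < m := hm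
  have hceil : ∀ v : ℕ, c ≤ v ↔ k ≤ m * v := by
    intro v
    rw [hc, Nat.div_le_iff_le_mul_add_pred hm0]
    omega
  have hck : c ≤ k := by
    rw [hceil]
    nlinarith
  have hpk : p ^ k ≠ 0 := pow_ne_zero _ hp.pos.ne'
  haveI : NeZero (p ^ k) := ⟨hpk⟩
  -- key: x^m = 0 ↔ p^c ∣ x.val
  have key : ∀ x : ZMod (p ^ k), x ^ m = 0 ↔ p ^ c ∣ x.val := by
    intro x
    have hx : ((x.val : ℕ) : ZMod (p ^ k)) = x := by
      simp [ZMod.natCast_val, ZMod.cast_id]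
    have hstep : x ^ m = 0 ↔ p ^ k ∣ x.val ^ m := by
      conv_lhs => rw [← hx]
      rw [← Nat.cast_pow, ZMod.natCast_eq_zero_iff]
    rw [hstep]
    rcases eq_or_ne x.val 0 with h0 | h0
    · simp [h0, zero_pow hm0.ne']
    · rw [hp.pow_dvd_iff_le_factorization h0,
        hp.pow_dvd_iff_le_factorization (pow_ne_zero m h0),
        Nat.factorization_pow]
      simp only [Finsupp.smul_apply, smul_eq_mul]
      exact (hceil _).symm
  -- bijection from Fin (p ^ (k - c))
  have hlt : ∀ i : Fin (p ^ (k - c)), (i : ℕ) * p ^ c < p ^ k := by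
    intro i
    calc (i : ℕ) * p ^ c < p ^ (k - c) * p ^ c :=
          (Nat.mul_lt_mul_right (pow_pos hp.pos c)).mpr i.isLt
      _ = p ^ k := by rw [← pow_add, Nat.sub_add_cancel hck]
  have hval : ∀ i : Fin (p ^ (k - c)),
      (((i : ℕ) * p ^ c : ℕ) : ZMod (p ^ k)).val = (i : ℕ) * p ^ c := by
    intro i
    rw [ZMod.val_natCast, Nat.mod_eq_of_lt (hlt i)]
  let g : Fin (p ^ (k - c)) → {x : ZMod (p ^ k) // x ^ m = 0} :=
    fun i => ⟨(((i : ℕ) * p ^ c : ℕ) : ZMod (p ^ k)), by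
      rw [key, hval]; exact dvd_mul_left _ _⟩
  have hbij : Function.Bijective g := by
    constructor
    · intro i j hij
      have := congrArg (fun x => (x : {x : ZMod (p ^ k) // x ^ m = 0}).1.val) hij
      simp only [g] at this
      rw [hval, hval] at this
      exact Fin.ext (Nat.eq_of_mul_eq_mul_right (pow_pos hp.pos c) this)
    · rintro ⟨x, hxm⟩
      obtain ⟨t, ht⟩ := (key x).mp hxm
      have hx : ((x.val : ℕ) : ZMod (p ^ k)) = x := by
        simp [ZMod.natCast_val, ZMod.cast_id]
      have hvlt : x.val < p ^ k := x.val_lt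
      have htlt : t < p ^ (k - c) := by
        by_contra hle
        push_neg at hle
        have : p ^ (k - c) * p ^ c ≤ t * p ^ c :=
          Nat.mul_le_mul_right _ hle
        rw [← pow_add, Nat.sub_add_cancel hck, mul_comm] at this
        omega
      refine ⟨⟨t, htlt⟩, ?_⟩
      apply Subtype.ext
      simp only [g]
      rw [← hx, ht, mul_comm]
  rw [← Nat.card_eq_of_bijective g hbij, Nat.card_eq_fintype_card, Fintype.card_fin]
end

section
/- Let m ≥ 1 be an integer, let p₁, …, p_m be pairwise distinct prime numbers, and let C be a real number with 0 < C < m. Then there is no polynomial g ∈ ℝ[x₁, …, x_m] such that for every tuple (a₁, …, a_m) of positive integers one has max_{1 ≤ j ≤ m} a_j^{p_j} ≤ g(a₁, …, a_m) ≤ C · max_{1 ≤ j ≤ m} a_j^{p_j}. -/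
/-!
Restrict `g` to monomial curves `a = (n ^ s₁, …, n ^ sₘ)`. If `d = max_i sᵢ pᵢ`, the
one-variable polynomial `n ↦ g(n ^ s)` lies between `n ^ d` and `C n ^ d`, so its coefficient
of `X ^ d`, which is the sum of the coefficients of the monomials `x ^ α` of `g` of weight
`∑ sᵢ αᵢ = d`, lies in `[1, C]`. With `s = (1, …, N, …, 1)` and `N` larger than the total degree
of `g`, the only such monomial is `x_j ^ p_j`, so each of these `m` coefficients is at least `1`.
With `sᵢ = ∏_{l ≠ i} p_l`, coprimality of the `p_l` forces every monomial of weight `∏ p_l` to be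
one of the `x_j ^ p_j`, so the same `m` coefficients sum to at most `C`. Hence `m ≤ C`.
-/

open Filter Finset Function Topology

namespace Polynomial

theorem natDegree_le_of_abs_eval_natCast_le {P : ℝ[X]} {c : ℝ} {d : ℕ}
    (h : ∀ᶠ n : ℕ in atTop, |P.eval (n : ℝ)| ≤ c * (n : ℝ) ^ d) : P.natDegree ≤ d := by
  by_contra! hd
  have hdeg : (X ^ d : ℝ[X]).degree < P.degree := degree_lt_degree (by simpa using hd)
  have hunbdd := (abs_div_tendsto_atTop_atTop_of_degree_gt P _ hdeg
    (pow_ne_zero d X_ne_zero)).comp tendsto_natCast_atTop_atTop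
  obtain ⟨n, hn1, hbd, hbig⟩ :=
    ((eventually_ge_atTop 1).and (h.and (hunbdd.eventually_gt_atTop c))).exists
  have hpos : (0 : ℝ) < (n : ℝ) ^ d := pow_pos (by exact_mod_cast hn1) d
  simp only [Function.comp_apply, eval_pow, eval_X, abs_div, abs_of_pos hpos,
    lt_div_iff₀ hpos] at hbig
  exact hbig.not_ge hbd

theorem tendsto_eval_div_pow_atTop {P : ℝ[X]} {d : ℕ} (hd : P.natDegree ≤ d) :
    Tendsto (fun x => P.eval x / x ^ d) atTop (𝓝 (P.coeff d)) := by
  rcases hd.lt_or_eq with hlt | rfl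
  · rw [coeff_eq_zero_of_natDegree_lt hlt]
    simpa using div_tendsto_atTop_zero_of_degree_lt P (X ^ d)
      (degree_lt_degree (by simpa using hlt))
  · rcases eq_or_ne P 0 with rfl | hP
    · simp
    · simpa using div_tendsto_atTop_leadingCoeff_div_of_degree_eq P (X ^ P.natDegree)
        (by rw [degree_X_pow, degree_eq_natDegree hP])

theorem coeff_mem_Icc_of_eval_natCast_mem_Icc {P : ℝ[X]} {a b : ℝ} {d : ℕ}
    (h : ∀ᶠ n : ℕ in atTop, P.eval (n : ℝ) ∈ Set.Icc (a * (n : ℝ) ^ d) (b * (n : ℝ) ^ d)) :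
    P.coeff d ∈ Set.Icc a b := by
  have hdeg : P.natDegree ≤ d := by
    refine natDegree_le_of_abs_eval_natCast_le (c := |a| + |b|) (h.mono fun n hn => ?_)
    have hnd : (0 : ℝ) ≤ (n : ℝ) ^ d := by positivity
    refine abs_le.2 ⟨?_, ?_⟩ <;>
      nlinarith [hn.1, hn.2, neg_abs_le a, le_abs_self b, abs_nonneg a, abs_nonneg b]
  refine isClosed_Icc.mem_of_tendsto
    ((tendsto_eval_div_pow_atTop hdeg).comp tendsto_natCast_atTop_atTop) ?_
  filter_upwards [h, eventually_ge_atTop 1] with n hn hn1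
  have hpos : (0 : ℝ) < (n : ℝ) ^ d := pow_pos (by exact_mod_cast hn1) d
  exact ⟨(le_div_iff₀ hpos).2 hn.1, (div_le_iff₀ hpos).2 hn.2⟩

end Polynomial

namespace MvPolynomial

variable {σ R : Type*} [CommSemiring R]

theorem eval_aeval_X_pow (g : MvPolynomial σ R) (s : σ → ℕ) (x : R) :
    (aeval (fun i => (Polynomial.X : Polynomial R) ^ s i) g).eval x =
      eval (fun i => x ^ s i) g := by
  induction g using MvPolynomial.induction_on with
  | C a => simp
  | add q r hq hr => simp [hq, hr]
  | mul_X q i hq => simp [hq]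

theorem coeff_aeval_X_pow (g : MvPolynomial σ R) (s : σ → ℕ) (d : ℕ) :
    (aeval (fun i => (Polynomial.X : Polynomial R) ^ s i) g).coeff d =
      ∑ α ∈ g.support with Finsupp.weight s α = d, coeff α g := by
  conv_lhs => rw [g.as_sum]
  rw [map_sum, Polynomial.finsetSum_coeff, sum_filter]
  refine sum_congr rfl fun α _ => ?_
  have hprod : (α.prod fun i k => ((Polynomial.X : Polynomial R) ^ s i) ^ k) =
      Polynomial.X ^ Finsupp.weight s α := by
    simp only [Finsupp.prod, ← pow_mul, prod_pow_eq_pow_sum, Finsupp.weight_apply, Finsupp.sum,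
      smul_eq_mul, mul_comm]
  rw [aeval_monomial, hprod, Polynomial.algebraMap_eq, Polynomial.coeff_C_mul_X_pow]
  simp only [eq_comm]

theorem coeff_aeval_X_pow_eq_sum {g : MvPolynomial σ R} {s : σ → ℕ} {d : ℕ}
    {T : Finset (σ →₀ ℕ)} (hT : ∀ α ∈ T, Finsupp.weight s α = d)
    (hsupp : ∀ α ∈ g.support, Finsupp.weight s α = d → α ∈ T) :
    (aeval (fun i => (Polynomial.X : Polynomial R) ^ s i) g).coeff d = ∑ α ∈ T, coeff α g := by
  rw [coeff_aeval_X_pow]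
  refine sum_subset (fun α hα => hsupp α (mem_filter.1 hα).1 (mem_filter.1 hα).2) fun α hα hα' => ?_
  by_contra hne
  exact hα' (mem_filter.2 ⟨mem_support_iff.2 hne, hT α hα⟩)

end MvPolynomial

namespace Finsupp

variable {σ : Type*} [Fintype σ] [DecidableEq σ]

theorem eq_single_of_weight_eq_mul {s : σ → ℕ} {j : σ} (hs : ∀ i ≠ j, s i = 1) {α : σ →₀ ℕ}
    (hα : α.degree < s j) {e : ℕ} (h : weight s α = s j * e) : α = single j e := by
  set r := ∑ i ∈ univ.erase j, α i
  have hr : r < s j := by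
    refine lt_of_le_of_lt ?_ hα
    rw [degree_eq_sum]
    exact sum_le_sum_of_subset (erase_subset j univ)
  have hsplit : weight s α = r + s j * α j := by
    rw [weight_eq_sum, ← sum_erase_add _ _ (mem_univ j), smul_eq_mul, mul_comm]
    congr 1
    exact Finset.sum_congr rfl fun i hi => by rw [hs i (ne_of_mem_erase hi), smul_eq_mul, mul_one]
  obtain ⟨hαj, hr0⟩ : α j = e ∧ r = 0 := by
    have hsj : 0 < s j := hr.trans_le' (Nat.zero_le r)
    have := (Nat.div_mod_unique hsj).2 ⟨hsplit ▸ h, hr⟩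
    rwa [Nat.mul_div_cancel_left _ hsj, Nat.mul_mod_right, eq_comm,
      eq_comm (a := 0)] at this
  ext i
  rcases eq_or_ne i j with rfl | hij
  · simp [hαj]
  · rw [single_eq_of_ne hij]
    exact Nat.eq_zero_of_le_zero
      (hr0 ▸ Finset.single_le_sum (fun _ _ => Nat.zero_le _) (mem_erase.2 ⟨hij, mem_univ i⟩))

theorem eq_single_of_weight_eq_prod {p : σ → ℕ} (hp : Pairwise (Nat.Coprime on p))
    (hpos : ∀ i, 0 < p i) {α : σ →₀ ℕ}
    (h : weight (fun i => ∏ l ∈ univ.erase i, p l) α = ∏ l, p l) : ∃ j, α = single j (p j) := by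
  set q : σ → ℕ := fun i => ∏ l ∈ univ.erase i, p l
  have hpq : ∀ i, p i * q i = ∏ l, p l := fun i => Finset.mul_prod_erase _ _ (mem_univ i)
  rw [weight_eq_sum] at h
  simp only [smul_eq_mul] at h
  have hdvd : ∀ k, p k ∣ α k := by
    intro k
    have hcop : (p k).Coprime (q k) :=
      Nat.Coprime.prod_right fun l hl => hp (ne_of_mem_erase hl).symm
    refine hcop.dvd_of_dvd_mul_right ?_
    have hrest : p k ∣ ∑ i ∈ univ.erase k, α i * q i :=
      dvd_sum fun i hi => dvd_mul_of_dvd_right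
        (dvd_prod_of_mem p (mem_erase.2 ⟨(ne_of_mem_erase hi).symm, mem_univ k⟩)) _
    have hall : p k ∣ ∑ i, α i * q i := h ▸ dvd_prod_of_mem p (mem_univ k)
    rw [← Finset.add_sum_erase _ _ (mem_univ k)] at hall
    exact (Nat.dvd_add_left hrest).1 hall
  set β : σ →₀ ℕ := equivFunOnFinite.symm fun i => α i / p i
  have hαβ : ∀ i, α i = p i * β i := fun i => (Nat.mul_div_cancel' (hdvd i)).symm
  have hβ : β.degree = 1 := by
    refine Nat.eq_of_mul_eq_mul_left (Finset.prod_pos fun l (_ : l ∈ univ) => hpos l) ?_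
    calc (∏ l, p l) * β.degree = ∑ i, α i * q i := by
          rw [degree_eq_sum, Finset.mul_sum]
          exact Finset.sum_congr rfl fun i _ => by rw [hαβ, ← hpq]; ring
      _ = (∏ l, p l) * 1 := by rw [h, mul_one]
  obtain ⟨j, hj⟩ := (sum_eq_one_iff β).1 hβ
  refine ⟨j, ext fun i => ?_⟩
  rw [hαβ, hj]
  rcases eq_or_ne i j with rfl | hij
  · simp
  · simp [single_eq_of_ne hij]

end Finsupp

namespace MvPolynomial

variable {σ : Type*} [Fintype σ] [Nonempty σ]

def ApproximatesMaxPow (p : σ → ℕ) (C : ℝ) (g : MvPolynomial σ ℝ) : Prop :=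
  ∀ a : σ → ℕ, (∀ j, 1 ≤ a j) →
    univ.sup' univ_nonempty (fun j => (a j : ℝ) ^ p j) ≤ eval (fun j => (a j : ℝ)) g ∧
      eval (fun j => (a j : ℝ)) g ≤ C * univ.sup' univ_nonempty (fun j => (a j : ℝ) ^ p j)

namespace ApproximatesMaxPow

variable {p : σ → ℕ} {C : ℝ} {g : MvPolynomial σ ℝ}

theorem coeff_aeval_X_pow_mem_Icc (hg : ApproximatesMaxPow p C g) {s : σ → ℕ} {j : σ}
    (hj : ∀ i, s i * p i ≤ s j * p j) :
    (aeval (fun i => (Polynomial.X : Polynomial ℝ) ^ s i) g).coeff (s j * p j) ∈ Set.Icc 1 C := by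
  refine Polynomial.coeff_mem_Icc_of_eval_natCast_mem_Icc ?_
  filter_upwards [eventually_ge_atTop 1] with n hn
  have hn1 : (1 : ℝ) ≤ n := by exact_mod_cast hn
  have hsup : univ.sup' univ_nonempty (fun i => ((n : ℝ) ^ s i) ^ p i) = (n : ℝ) ^ (s j * p j) :=
    le_antisymm
      (sup'_le _ _ fun i _ => by rw [← pow_mul]; exact pow_le_pow_right₀ hn1 (hj i))
      (le_sup'_of_le _ (mem_univ j) (pow_mul _ _ _).le)
  have := hg (fun i => n ^ s i) fun i => Nat.one_le_pow _ _ hn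
  push_cast at this
  rw [hsup] at this
  rw [eval_aeval_X_pow, one_mul]
  exact this

theorem one_le_coeff_single (hg : ApproximatesMaxPow p C g) {j : σ} (hj : 0 < p j) :
    1 ≤ coeff (Finsupp.single j (p j)) g := by
  classical
  set N := g.totalDegree + ∑ i, p i + 1
  set s := Function.update (fun _ => 1) j N
  have hsj : s j = N := Function.update_self ..
  have hs : ∀ i ≠ j, s i = 1 := fun i hi => Function.update_of_ne hi ..
  have hmax : ∀ i, s i * p i ≤ s j * p j := by
    intro i
    rcases eq_or_ne i j with rfl | hij
    · rfl
    · rw [hs i hij, one_mul, hsj]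
      exact (single_le_sum (fun _ _ => Nat.zero_le _) (mem_univ i)).trans
        (((Nat.le_add_left _ _).trans (Nat.le_succ _)).trans (Nat.le_mul_of_pos_right N hj))
  have := (hg.coeff_aeval_X_pow_mem_Icc hmax).1
  rwa [coeff_aeval_X_pow_eq_sum (T := {Finsupp.single j (p j)}), sum_singleton] at this
  · simp [Finsupp.weight_single, mul_comm]
  · intro α hα hw
    refine mem_singleton.2 (Finsupp.eq_single_of_weight_eq_mul hs ?_ hw)
    exact hsj ▸ Nat.lt_succ_of_le ((le_totalDegree hα).trans (Nat.le_add_right _ _))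

theorem sum_coeff_single_le (hg : ApproximatesMaxPow p C g)
    (hp : Pairwise (Nat.Coprime on p)) (hpos : ∀ i, 0 < p i) :
    ∑ j, coeff (Finsupp.single j (p j)) g ≤ C := by
  classical
  set q : σ → ℕ := fun i => ∏ l ∈ univ.erase i, p l
  have hqp : ∀ i, q i * p i = ∏ l, p l := fun i => prod_erase_mul _ _ (mem_univ i)
  obtain ⟨j⟩ := ‹Nonempty σ›
  have := (hg.coeff_aeval_X_pow_mem_Icc fun i => ((hqp i).trans (hqp j).symm).le).2
  have hinj : Set.InjOn (fun j => Finsupp.single j (p j)) (univ : Finset σ) := fun i _ k _ hik =>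
    (((Finsupp.single_eq_single_iff ..).1 hik).resolve_right fun h => (hpos i).ne' h.1).1
  rwa [hqp j, coeff_aeval_X_pow_eq_sum (T := univ.image fun j => Finsupp.single j (p j)),
    sum_image hinj] at this
  · simpa [Finsupp.weight_single, mul_comm] using hqp
  · intro α _ hw
    obtain ⟨k, rfl⟩ := Finsupp.eq_single_of_weight_eq_prod hp hpos hw
    exact mem_image_of_mem _ (mem_univ k)

theorem card_le (hg : ApproximatesMaxPow p C g) (hp : Pairwise (Nat.Coprime on p))
    (hpos : ∀ i, 0 < p i) : (Fintype.card σ : ℝ) ≤ C :=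
  calc (Fintype.card σ : ℝ) = ∑ _j : σ, (1 : ℝ) := by simp
    _ ≤ ∑ j, coeff (Finsupp.single j (p j)) g :=
      sum_le_sum fun j _ => hg.one_le_coeff_single (hpos j)
    _ ≤ C := hg.sum_coeff_single_le hp hpos

end ApproximatesMaxPow

end MvPolynomial

theorem stmt6_general (m : ℕ) (hm : 1 ≤ m) (p : Fin m → ℕ)
    (hprime : ∀ j, (p j).Prime) (hdist : Function.Injective p)
    (C : ℝ) (hCm : C < m) :
    ¬ ∃ g : MvPolynomial (Fin m) ℝ,
      ∀ a : Fin m → ℕ, (∀ j, 1 ≤ a j) →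
        (Finset.univ.sup' (Finset.univ_nonempty_iff.mpr ⟨⟨0, hm⟩⟩)
            (fun j => ((a j : ℝ)) ^ (p j)) ≤ MvPolynomial.eval (fun j => ((a j : ℝ))) g) ∧
        (MvPolynomial.eval (fun j => ((a j : ℝ))) g ≤
          C * Finset.univ.sup' (Finset.univ_nonempty_iff.mpr ⟨⟨0, hm⟩⟩)
            (fun j => ((a j : ℝ)) ^ (p j))) := by
  rintro ⟨g, hg⟩
  have : Nonempty (Fin m) := ⟨⟨0, hm⟩⟩
  have hcoprime : Pairwise (Nat.Coprime on p) := fun i j hij =>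
    (Nat.coprime_primes (hprime i) (hprime j)).2 (hdist.ne hij)
  have hcard := MvPolynomial.ApproximatesMaxPow.card_le hg hcoprime fun j => (hprime j).pos
  rw [Fintype.card_fin] at hcard
  linarith

theorem stmt6 (m : ℕ) (hm : 1 ≤ m) (p : Fin m → ℕ)
    (hprime : ∀ j, (p j).Prime) (hdist : Function.Injective p)
    (C : ℝ) (hC0 : 0 < C) (hCm : C < m) :
    ¬ ∃ g : MvPolynomial (Fin m) ℝ,
      ∀ a : Fin m → ℕ, (∀ j, 1 ≤ a j) →
        (Finset.univ.sup' (Finset.univ_nonempty_iff.mpr ⟨⟨0, hm⟩⟩)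
            (fun j => ((a j : ℝ)) ^ (p j)) ≤ MvPolynomial.eval (fun j => ((a j : ℝ))) g) ∧
        (MvPolynomial.eval (fun j => ((a j : ℝ))) g ≤
          C * Finset.univ.sup' (Finset.univ_nonempty_iff.mpr ⟨⟨0, hm⟩⟩)
            (fun j => ((a j : ℝ)) ^ (p j))) :=
  stmt6_general m hm p hprime hdist C hCm
end

section
/- Let d ∈ ℕ, let C₁, C₂ > 0 be real numbers, let Q ⊆ ℕ be an unbounded set, let Y : ℕ → ℕ satisfy Y(q) ≤ C₂·q^d for all q ∈ Q, and suppose there is an unbounded subset Q' ⊆ Q with C₁·q^d ≤ Y(q) for all q ∈ Q'. Let N ∈ ℕ, let (a₁, b₁), …, (a_N, b_N) be pairwise distinct pairs with a_i ∈ ℚ and b_i ∈ ℕ, and let c₁, …, c_N : ℕ → ℝ be real rational functions, i.e. for each i there exist real polynomials P_i, S_i with S_i ≠ 0 such that c_i(q) = P_i(q)/S_i(q) for all sufficiently large q. Define g(q, k) := Y(q) · Σ_{i=1}^{N} c_i(q) · q^{a_i·k} · k^{b_i} for q ∈ Q and k ≥ 1, where q^{a_i·k} denotes the real power (q : ℝ)^{a_i·k}.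 Assume that for every real δ > 0 and every integer k ≥ 1, q^{−δ}·g(q, k) → 0 as q → ∞ along Q. Then there exist a constant C > 0, an integer M ∈ ℕ and q₀ ∈ ℕ such that |g(q, k)| ≤ C·k^M for every integer k ≥ 1 and every q ∈ Q with q ≥ q₀. -/
open Filter Real Finset Polynomial


lemma keyB : ∀ (E : Finset ℝ), ∀ (γ : ℝ → ℝ) (ρ : ℝ) (Q' : Set ℕ),
    (∀ n : ℕ, ∃ q ∈ Q', n ≤ q) →
    (∀ r : ℝ, ρ < r → ∀ ε : ℝ, 0 < ε → ∃ q₁ : ℕ, ∀ q ∈ Q', q₁ ≤ q →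
      |∑ x ∈ E, γ x * (q : ℝ) ^ x| ≤ ε * (q : ℝ) ^ r) →
    ∀ x ∈ E, ρ < x → γ x = 0 := by
  intro E
  induction E using Finset.strongInduction with
  | _ E ih =>
    intro γ ρ Q' hQ' hH x hxE hρx
    have hne : E.Nonempty := ⟨x, hxE⟩
    set m := E.max' hne with hm
    have hmE : m ∈ E := E.max'_mem hne
    have hρm : ρ < m := lt_of_lt_of_le hρx (E.le_max' x hxE)
    -- first: γ m = 0
    have hγm : γ m = 0 := by
      by_contra hγ
      have hγpos : 0 < |γ m| := abs_pos.2 hγ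
      set r := (ρ + m) / 2 with hr
      have hρr : ρ < r := by rw [hr]; linarith
      have hrm : r < m := by rw [hr]; linarith
      obtain ⟨q₁, hq₁⟩ := hH r hρr 1 one_pos
      set φ : ℝ → ℝ := fun t => t ^ (r - m) + ∑ y ∈ E.erase m, |γ y| * t ^ (y - m) with hφ
      have hφ0 : Tendsto φ atTop (nhds 0) := by
        have h1 : Tendsto (fun t : ℝ => t ^ (r - m)) atTop (nhds 0) := by
          have := tendsto_rpow_neg_atTop (y := m - r) (by linarith)
          simpa [neg_sub] using this
        have h2 : Tendsto (fun t : ℝ => ∑ y ∈ E.erase m, |γ y| * t ^ (y - m)) atTop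
            (nhds 0) := by
          have : Tendsto (fun t : ℝ => ∑ y ∈ E.erase m, |γ y| * t ^ (y - m)) atTop
              (nhds (∑ y ∈ E.erase m, 0)) := by
            apply tendsto_finset_sum
            intro y hy
            have hym : y < m := lt_of_le_of_ne (E.le_max' y (mem_of_mem_erase hy))
              (ne_of_mem_erase hy)
            have := (tendsto_rpow_neg_atTop (y := m - y) (by linarith)).const_mul |γ y|
            simpa [neg_sub] using this
          simpa using this
        simpa using h1.add h2
      obtain ⟨T, hT⟩ := eventually_atTop.1 (hφ0.eventually_lt_const hγpos)
      obtain ⟨q, hqQ', hq⟩ := hQ' (max q₁ (⌈T⌉₊ + 1))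
      have hq₁q : q₁ ≤ q := le_trans (le_max_left _ _) hq
      have hq1 : 1 ≤ q := le_trans (by simp) (le_trans (le_max_right _ _) hq)
      have hqT : T ≤ (q : ℝ) := by
        calc T ≤ (⌈T⌉₊ : ℝ) := Nat.le_ceil T
        _ ≤ (q : ℝ) := by exact_mod_cast le_trans (Nat.le_succ _) (le_trans (le_max_right _ _) hq)
      have hqpos : (0 : ℝ) < q := by exact_mod_cast hq1
      have hφq : φ q < |γ m| := hT q hqT
      have hsum : |∑ y ∈ E, γ y * (q : ℝ) ^ y| ≤ 1 * (q : ℝ) ^ r := hq₁ q hqQ' hq₁q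
      have hsplit : γ m * (q : ℝ) ^ m
          = (∑ y ∈ E, γ y * (q : ℝ) ^ y) - ∑ y ∈ E.erase m, γ y * (q : ℝ) ^ y := by
        rw [← Finset.sum_erase_add E _ hmE]; ring
      have habs : |γ m| * (q : ℝ) ^ m
          ≤ (q : ℝ) ^ r + ∑ y ∈ E.erase m, |γ y| * (q : ℝ) ^ y := by
        have h1 : |γ m * (q : ℝ) ^ m| ≤ |∑ y ∈ E, γ y * (q : ℝ) ^ y|
            + |∑ y ∈ E.erase m, γ y * (q : ℝ) ^ y| := by
          rw [hsplit]; exact abs_sub _ _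
        have h2 : |∑ y ∈ E.erase m, γ y * (q : ℝ) ^ y|
            ≤ ∑ y ∈ E.erase m, |γ y| * (q : ℝ) ^ y := by
          refine le_trans (Finset.abs_sum_le_sum_abs _ _) (le_of_eq ?_)
          refine Finset.sum_congr rfl fun y _ => ?_
          rw [abs_mul, abs_of_nonneg (rpow_nonneg hqpos.le _)]
        rw [abs_mul, abs_of_nonneg (rpow_nonneg hqpos.le _)] at h1
        nlinarith [hsum]
      have hmul : φ q * (q : ℝ) ^ m
          = (q : ℝ) ^ r + ∑ y ∈ E.erase m, |γ y| * (q : ℝ) ^ y := by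
        rw [hφ]
        rw [add_mul, Finset.sum_mul]
        congr 1
        · rw [← Real.rpow_add hqpos]; ring_nf
        · refine Finset.sum_congr rfl fun y _ => ?_
          rw [mul_assoc, ← Real.rpow_add hqpos]; ring_nf
      have : φ q * (q : ℝ) ^ m < |γ m| * (q : ℝ) ^ m :=
        mul_lt_mul_of_pos_right hφq (rpow_pos_of_pos hqpos m)
      rw [hmul] at this
      linarith
    -- now recurse
    rcases eq_or_ne x m with hxm | hxm
    · rw [hxm]; exact hγm
    · refine ih (E.erase m) (Finset.erase_ssubset hmE) γ ρ Q' hQ' ?_ x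
        (Finset.mem_erase.2 ⟨hxm, hxE⟩) hρx
      intro r hr ε hε
      obtain ⟨q₁, hq₁⟩ := hH r hr ε hε
      refine ⟨q₁, fun q hqQ' hq => ?_⟩
      have : ∑ y ∈ E.erase m, γ y * (q : ℝ) ^ y = ∑ y ∈ E, γ y * (q : ℝ) ^ y := by
        rw [← Finset.sum_erase_add E _ hmE, hγm]; ring
      rw [this]; exact hq₁ q hqQ' hq

lemma keyA {ι : Type*} [DecidableEq ι] (s : Finset ι) (w : ι → ℝ) (r : ι → ℝ) (ρ : ℝ)
    (Q' : Set ℕ) (hQ' : ∀ n : ℕ, ∃ q ∈ Q', n ≤ q)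
    (hH : ∀ r' : ℝ, ρ < r' → ∀ ε : ℝ, 0 < ε → ∃ q₁ : ℕ, ∀ q ∈ Q', q₁ ≤ q →
      |∑ t ∈ s, w t * (q : ℝ) ^ (r t)| ≤ ε * (q : ℝ) ^ r') :
    ∀ q : ℕ, 1 ≤ q → |∑ t ∈ s, w t * (q : ℝ) ^ (r t)| ≤ (∑ t ∈ s, |w t|) * (q : ℝ) ^ ρ := by
  classical
  set E := s.image r with hE
  set γ : ℝ → ℝ := fun x => ∑ t ∈ s.filter (fun t => r t = x), w t with hγ
  have hgroup : ∀ q : ℕ, 1 ≤ q →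
      ∑ t ∈ s, w t * (q : ℝ) ^ (r t) = ∑ x ∈ E, γ x * (q : ℝ) ^ x := by
    intro q hq
    rw [hE, ← Finset.sum_fiberwise_of_maps_to (fun t ht => Finset.mem_image_of_mem r ht)
      (fun t => w t * (q : ℝ) ^ (r t))]
    refine Finset.sum_congr rfl fun x hx => ?_
    rw [hγ, Finset.sum_mul]
    refine Finset.sum_congr rfl fun t ht => ?_
    rw [(Finset.mem_filter.1 ht).2]
  have hvan : ∀ x ∈ E, ρ < x → γ x = 0 := by
    apply keyB E γ ρ Q' hQ'
    intro r' hr' ε hε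
    obtain ⟨q₁, hq₁⟩ := hH r' hr' ε hε
    refine ⟨max q₁ 1, fun q hqQ' hq => ?_⟩
    rw [← hgroup q (le_trans (le_max_right _ _) hq)]
    exact hq₁ q hqQ' (le_trans (le_max_left _ _) hq)
  intro q hq
  have hqpos : (0 : ℝ) < q := by exact_mod_cast hq
  have hq1 : (1 : ℝ) ≤ q := by exact_mod_cast hq
  rw [hgroup q hq]
  calc |∑ x ∈ E, γ x * (q : ℝ) ^ x| ≤ ∑ x ∈ E, |γ x * (q : ℝ) ^ x| :=
        Finset.abs_sum_le_sum_abs _ _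
    _ ≤ ∑ x ∈ E, |γ x| * (q : ℝ) ^ ρ := by
        refine Finset.sum_le_sum fun x hx => ?_
        rw [abs_mul, abs_of_nonneg (rpow_nonneg hqpos.le _)]
        rcases le_or_gt x ρ with h | h
        · exact mul_le_mul_of_nonneg_left (rpow_le_rpow_of_exponent_le hq1 h) (abs_nonneg _)
        · rw [hvan x hx h]; simp
    _ = (∑ x ∈ E, |γ x|) * (q : ℝ) ^ ρ := by rw [Finset.sum_mul]
    _ ≤ (∑ t ∈ s, |w t|) * (q : ℝ) ^ ρ := by
        refine mul_le_mul_of_nonneg_right ?_ (rpow_nonneg hqpos.le _)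
        calc ∑ x ∈ E, |γ x| ≤ ∑ x ∈ E, ∑ t ∈ s.filter (fun t => r t = x), |w t| :=
              Finset.sum_le_sum fun x _ => Finset.abs_sum_le_sum_abs _ _
          _ = ∑ t ∈ s, |w t| :=
              Finset.sum_fiberwise_of_maps_to (fun t ht => Finset.mem_image_of_mem r ht) _

theorem stmt7 (d : ℕ) (C₁ C₂ : ℝ) (hC₁ : 0 < C₁) (hC₂ : 0 < C₂)
    (Q : Set ℕ) (hQ : ∀ n : ℕ, ∃ q ∈ Q, n ≤ q)
    (Y : ℕ → ℕ) (hY : ∀ q ∈ Q, (Y q : ℝ) ≤ C₂ * (q : ℝ) ^ d)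
    (Q' : Set ℕ) (hQ'sub : Q' ⊆ Q) (hQ' : ∀ n : ℕ, ∃ q ∈ Q', n ≤ q)
    (hYlow : ∀ q ∈ Q', C₁ * (q : ℝ) ^ d ≤ (Y q : ℝ))
    (N : ℕ) (a : Fin N → ℚ) (b : Fin N → ℕ)
    (hdist : Function.Injective (fun i => (a i, b i)))
    (c : Fin N → ℕ → ℝ)
    (hc : ∀ i, ∃ P S : Polynomial ℝ, S ≠ 0 ∧ ∃ q₀ : ℕ, ∀ q : ℕ, q₀ ≤ q →
      c i q = P.eval (q : ℝ) / S.eval (q : ℝ))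
    (g : ℕ → ℕ → ℝ)
    (hg : ∀ q k, g q k =
      (Y q : ℝ) * ∑ i, c i q * (q : ℝ) ^ ((a i : ℝ) * (k : ℝ)) * (k : ℝ) ^ (b i))
    (hlim : ∀ δ : ℝ, 0 < δ → ∀ k : ℕ, 1 ≤ k → ∀ ε : ℝ, 0 < ε →
      ∃ q₁ : ℕ, ∀ q ∈ Q, q₁ ≤ q → |(q : ℝ) ^ (-δ) * g q k| < ε) :
    ∃ C : ℝ, 0 < C ∧ ∃ M : ℕ, ∃ q₀ : ℕ, ∀ k : ℕ, 1 ≤ k → ∀ q ∈ Q, q₀ ≤ q →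
      |g q k| ≤ C * (k : ℝ) ^ M := by
  classical
  choose P S hSne q₀f hPS using hc
  set Sp : Polynomial ℝ := ∏ i, S i with hSpdef
  have hSpne : Sp ≠ 0 := Finset.prod_ne_zero_iff.2 fun i _ => hSne i
  set s : ℕ := Sp.natDegree with hsdef
  set cS : ℝ := |Sp.leadingCoeff| / 2 with hcSdef
  have hcS : 0 < cS := by
    have := Polynomial.leadingCoeff_ne_zero.2 hSpne
    have : 0 < |Sp.leadingCoeff| := abs_pos.2 this
    linarith
  -- eventual lower bound for |Sp.eval|
  have hlow : ∃ T : ℝ, ∀ t : ℝ, T ≤ t → cS * t ^ s ≤ |Sp.eval t| := by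
    have hequiv := Polynomial.isEquivalent_atTop_lead Sp
    have hlo := (Asymptotics.isLittleO_iff.1 hequiv) (c := 1/2) (by norm_num)
    have hev : ∀ᶠ t : ℝ in atTop, cS * t ^ s ≤ |Sp.eval t| := by
      filter_upwards [hlo, eventually_ge_atTop (0:ℝ)] with t ht ht0
      have h1 : ‖Sp.eval t - Sp.leadingCoeff * t ^ s‖ ≤ 1/2 * ‖Sp.leadingCoeff * t ^ s‖ := ht
      have h2 : ‖Sp.leadingCoeff * t ^ s‖ = |Sp.leadingCoeff| * t ^ s := by
        rw [norm_mul, Real.norm_eq_abs, Real.norm_eq_abs, abs_pow, abs_of_nonneg ht0]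
      rw [Real.norm_eq_abs, h2] at h1
      have h3 : |Sp.leadingCoeff * t ^ s| - |Sp.eval t - Sp.leadingCoeff * t ^ s| ≤ |Sp.eval t| := by
        have := abs_sub_abs_le_abs_sub (Sp.leadingCoeff * t ^ s) (Sp.leadingCoeff * t ^ s - Sp.eval t)
        simp only [sub_sub_cancel] at this
        rw [abs_sub_comm] at this
        linarith [this]
      rw [abs_mul, abs_pow, abs_of_nonneg ht0] at h3
      rw [hcSdef]; linarith
    obtain ⟨T, hT⟩ := eventually_atTop.1 hev
    exact ⟨T, hT⟩
  obtain ⟨T, hT⟩ := hlow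
  set q₀' : ℕ := max (Finset.univ.sup q₀f) (⌈T⌉₊ + 1) with hq₀'def
  have hq₀'1 : 1 ≤ q₀' := le_trans (by simp) (le_max_right _ _)
  have hq₀'T : ∀ q : ℕ, q₀' ≤ q → T ≤ (q : ℝ) := by
    intro q hq
    calc T ≤ (⌈T⌉₊ : ℝ) := Nat.le_ceil T
    _ ≤ (q : ℝ) := by
        exact_mod_cast le_trans (Nat.le_succ _) (le_trans (le_max_right _ _) hq)
  have hq₀'c : ∀ i, ∀ q : ℕ, q₀' ≤ q → c i q = (P i).eval (q : ℝ) / (S i).eval (q : ℝ) := by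
    intro i q hq
    exact hPS i q (le_trans (le_trans (Finset.le_sup (Finset.mem_univ i)) (le_max_left _ _)) hq)
  have hSplow : ∀ q : ℕ, q₀' ≤ q → cS * (q : ℝ) ^ s ≤ |Sp.eval (q : ℝ)| :=
    fun q hq => hT _ (hq₀'T q hq)
  have hSpne' : ∀ q : ℕ, q₀' ≤ q → Sp.eval (q : ℝ) ≠ 0 := by
    intro q hq
    have hq1 : (1:ℝ) ≤ q := by exact_mod_cast le_trans hq₀'1 hq
    have : 0 < cS * (q : ℝ) ^ s := by positivity
    have := lt_of_lt_of_le this (hSplow q hq)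
    exact fun h => by simp [h] at this
  -- upper bound for |Sp.eval|
  set CS : ℝ := ∑ j ∈ Finset.range (s + 1), |Sp.coeff j| with hCSdef
  have hCS : 0 < CS := by
    have h1 : 0 < |Sp.coeff s| := abs_pos.2 (by
      rw [hsdef]; exact Polynomial.leadingCoeff_ne_zero.2 hSpne)
    have h2 : |Sp.coeff s| ≤ CS :=
      Finset.single_le_sum (f := fun j => |Sp.coeff j|) (fun j _ => abs_nonneg _)
        (Finset.self_mem_range_succ s)
    linarith
  have hSup : ∀ q : ℕ, 1 ≤ q → |Sp.eval (q : ℝ)| ≤ CS * (q : ℝ) ^ s := by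
    intro q hq
    have hq1 : (1:ℝ) ≤ q := by exact_mod_cast hq
    rw [Polynomial.eval_eq_sum_range (p := Sp) (q : ℝ)]
    calc |∑ j ∈ Finset.range (s + 1), Sp.coeff j * (q : ℝ) ^ j|
        ≤ ∑ j ∈ Finset.range (s + 1), |Sp.coeff j * (q : ℝ) ^ j| :=
          Finset.abs_sum_le_sum_abs _ _
      _ ≤ ∑ j ∈ Finset.range (s + 1), |Sp.coeff j| * (q : ℝ) ^ s := by
          refine Finset.sum_le_sum fun j hj => ?_
          rw [abs_mul, abs_pow, abs_of_nonneg (by linarith : (0:ℝ) ≤ q)]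
          exact mul_le_mul_of_nonneg_left
            (pow_le_pow_right₀ hq1 (Nat.lt_succ_iff.1 (Finset.mem_range.1 hj))) (abs_nonneg _)
      _ = CS * (q : ℝ) ^ s := by rw [hCSdef, Finset.sum_mul]
  -- the R polynomials
  set R : Fin N → Polynomial ℝ := fun i => P i * ∏ j ∈ Finset.univ.erase i, S j with hRdef
  set D : ℕ := (Finset.univ.sup fun i => (R i).natDegree) + 1 with hDdef
  have hD : ∀ i, (R i).natDegree < D :=
    fun i => Nat.lt_succ_of_le (Finset.le_sup (f := fun i => (R i).natDegree) (Finset.mem_univ i))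
  set idx : Finset (Fin N × ℕ) := Finset.univ ×ˢ Finset.range D with hidxdef
  set M : ℕ := Finset.univ.sup b with hMdef
  set CR : ℝ := ∑ t ∈ idx, |(R t.1).coeff t.2| with hCRdef
  have hCR0 : 0 ≤ CR := Finset.sum_nonneg fun t _ => abs_nonneg _
  set ρ : ℝ := (s : ℝ) - (d : ℝ) with hρdef
  -- the per-k data
  set w : ℕ → Fin N × ℕ → ℝ := fun k t => (R t.1).coeff t.2 * (k : ℝ) ^ (b t.1) with hwdef
  set rr : ℕ → Fin N × ℕ → ℝ := fun k t => (t.2 : ℝ) + (a t.1 : ℝ) * (k : ℝ) with hrrdef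
  -- the identity
  have hident : ∀ k : ℕ, ∀ q : ℕ, q₀' ≤ q →
      ∑ t ∈ idx, w k t * (q : ℝ) ^ (rr k t)
        = Sp.eval (q : ℝ) * ∑ i, c i q * (q : ℝ) ^ ((a i : ℝ) * (k : ℝ)) * (k : ℝ) ^ (b i) := by
    intro k q hq
    have hq1 : 1 ≤ q := le_trans hq₀'1 hq
    have hqpos : (0:ℝ) < q := by exact_mod_cast hq1
    have hSine : ∀ i, (S i).eval (q : ℝ) ≠ 0 := by
      intro i
      have := hSpne' q hq
      rw [hSpdef, Polynomial.eval_prod] at this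
      exact fun h => this (Finset.prod_eq_zero (Finset.mem_univ i) h)
    rw [hidxdef, Finset.sum_product, Finset.mul_sum]
    refine Finset.sum_congr rfl fun i _ => ?_
    have hinner : ∀ j : ℕ, w k (i, j) * (q : ℝ) ^ (rr k (i, j))
        = ((R i).coeff j * (q : ℝ) ^ j) * ((q : ℝ) ^ ((a i : ℝ) * (k : ℝ)) * (k : ℝ) ^ (b i)) := by
      intro j
      rw [hwdef, hrrdef]
      simp only
      rw [Real.rpow_add hqpos, Real.rpow_natCast]
      ring
    calc ∑ j ∈ Finset.range D, w k (i, j) * (q : ℝ) ^ (rr k (i, j))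
        = (∑ j ∈ Finset.range D, (R i).coeff j * (q : ℝ) ^ j)
            * ((q : ℝ) ^ ((a i : ℝ) * (k : ℝ)) * (k : ℝ) ^ (b i)) := by
          rw [Finset.sum_mul]
          exact Finset.sum_congr rfl fun j _ => hinner j
      _ = (R i).eval (q : ℝ) * ((q : ℝ) ^ ((a i : ℝ) * (k : ℝ)) * (k : ℝ) ^ (b i)) := by
          rw [Polynomial.eval_eq_sum_range' (hD i)]
      _ = Sp.eval (q : ℝ) * (c i q * (q : ℝ) ^ ((a i : ℝ) * (k : ℝ)) * (k : ℝ) ^ (b i)) := by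
          rw [hq₀'c i q hq, hRdef]
          simp only [Polynomial.eval_mul]
          have hSpfac : Sp.eval (q : ℝ)
              = (S i).eval (q : ℝ) * (∏ j ∈ Finset.univ.erase i, S j).eval (q : ℝ) := by
            rw [hSpdef, ← Polynomial.eval_mul, Finset.mul_prod_erase _ _ (Finset.mem_univ i)]
          rw [hSpfac]
          field_simp
          rw [eq_div_iff (hSine i)]
  -- H expressed via g
  have hgH : ∀ k q : ℕ, q₀' ≤ q →
      g q k * Sp.eval (q:ℝ) = (Y q : ℝ) * ∑ t ∈ idx, w k t * (q : ℝ) ^ (rr k t) := by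
    intro k q hq
    rw [hg q k, hident k q hq]; ring
  have hCSne : CS ≠ 0 := ne_of_gt hCS
  have hC₁ne : C₁ ≠ 0 := ne_of_gt hC₁
  -- the keyA hypothesis, per k
  have hkeyhyp : ∀ k : ℕ, 1 ≤ k → ∀ r' : ℝ, ρ < r' → ∀ ε : ℝ, 0 < ε →
      ∃ q₁ : ℕ, ∀ q ∈ Q', q₁ ≤ q →
        |∑ t ∈ idx, w k t * (q:ℝ) ^ (rr k t)| ≤ ε * (q:ℝ) ^ r' := by
    intro k hk r' hr' ε hε
    set δ := r' - ρ with hδdef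
    have hδ : 0 < δ := by rw [hδdef]; linarith
    have hε'' : 0 < ε * C₁ / CS := div_pos (mul_pos hε hC₁) hCS
    obtain ⟨q₁, hq₁⟩ := hlim δ hδ k hk _ hε''
    refine ⟨max q₁ q₀', fun q hqQ' hq => ?_⟩
    have hqQ : q ∈ Q := hQ'sub hqQ'
    have hq0' : q₀' ≤ q := le_trans (le_max_right _ _) hq
    have hq1n : 1 ≤ q := le_trans hq₀'1 hq0'
    have hqpos : (0:ℝ) < q := by exact_mod_cast hq1n
    have hq1 : (1:ℝ) ≤ q := by exact_mod_cast hq1n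
    have hYpos : (0:ℝ) < Y q := by
      have h := hYlow q hqQ'
      have hqd : (0:ℝ) < (q:ℝ)^d := by positivity
      nlinarith
    have hglim := hq₁ q hqQ (le_trans (le_max_left _ _) hq)
    have hgb : |g q k| ≤ (ε * C₁ / CS) * (q:ℝ) ^ δ := by
      have h1 : |g q k| = (q:ℝ)^δ * |(q:ℝ)^(-δ) * g q k| := by
        rw [abs_mul, abs_of_nonneg (Real.rpow_nonneg hqpos.le _), ← mul_assoc,
          ← Real.rpow_add hqpos]
        simp
      rw [h1]
      calc (q:ℝ)^δ * |(q:ℝ)^(-δ) * g q k| ≤ (q:ℝ)^δ * (ε * C₁ / CS) :=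
            mul_le_mul_of_nonneg_left hglim.le (Real.rpow_nonneg hqpos.le _)
        _ = (ε * C₁ / CS) * (q:ℝ)^δ := by ring
    have hYne : (Y q : ℝ) ≠ 0 := ne_of_gt hYpos
    have hHeq : ∑ t ∈ idx, w k t * (q:ℝ) ^ (rr k t) = g q k * Sp.eval (q:ℝ) / (Y q : ℝ) := by
      rw [eq_div_iff hYne]
      linarith [hgH k q hq0']
    have hHabs : |∑ t ∈ idx, w k t * (q:ℝ) ^ (rr k t)|
        = |Sp.eval (q:ℝ)| * |g q k| / (Y q : ℝ) := by
      rw [hHeq, abs_div, abs_mul, Nat.abs_cast]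
      ring
    rw [hHabs]
    have hnum : |Sp.eval (q:ℝ)| * |g q k| ≤ (CS * (q:ℝ)^s) * ((ε*C₁/CS) * (q:ℝ)^δ) :=
      mul_le_mul (hSup q hq1n) hgb (abs_nonneg _)
        (mul_nonneg hCS.le (pow_nonneg hqpos.le s))
    have hden : C₁ * (q:ℝ)^(d:ℕ) ≤ (Y q : ℝ) := hYlow q hqQ'
    have hfrac : |Sp.eval (q:ℝ)| * |g q k| / (Y q:ℝ)
        ≤ (CS * (q:ℝ)^s) * ((ε*C₁/CS) * (q:ℝ)^δ) / (C₁ * (q:ℝ)^(d:ℕ)) :=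
      div_le_div₀ (mul_nonneg (mul_nonneg hCS.le (pow_nonneg hqpos.le s))
          (mul_nonneg hε''.le (Real.rpow_nonneg hqpos.le δ)))
        hnum (mul_pos hC₁ (pow_pos hqpos d)) hden
    refine le_trans hfrac (le_of_eq ?_)
    have hrw : (q:ℝ) ^ r' = (q:ℝ)^((s:ℕ):ℝ) * (q:ℝ)^δ / (q:ℝ)^((d:ℕ):ℝ) := by
      rw [← Real.rpow_add hqpos, ← Real.rpow_sub hqpos]
      congr 1
      rw [hδdef, hρdef]; ring
    have hqsne : ((q:ℝ)^((s:ℕ):ℝ)) ≠ 0 := ne_of_gt (Real.rpow_pos_of_pos hqpos _)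
    have hqdne : ((q:ℝ)^((d:ℕ):ℝ)) ≠ 0 := ne_of_gt (Real.rpow_pos_of_pos hqpos _)
    rw [hrw, ← Real.rpow_natCast (q:ℝ) s, ← Real.rpow_natCast (q:ℝ) d]
    field_simp [hCSne, hC₁ne]
  -- conclusion
  refine ⟨C₂ * (CR + 1) / cS, div_pos (mul_pos hC₂ (by linarith)) hcS, M, q₀', ?_⟩
  intro k hk q hqQ hq
  have hq1n : 1 ≤ q := le_trans hq₀'1 hq
  have hqpos : (0:ℝ) < q := by exact_mod_cast hq1n
  have hk1 : (1:ℝ) ≤ k := by exact_mod_cast hk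
  have hkpos : (0:ℝ) < k := by linarith
  have hHb := keyA idx (w k) (rr k) ρ Q' hQ' (hkeyhyp k hk) q hq1n
  have hW : ∑ t ∈ idx, |w k t| ≤ CR * (k:ℝ)^M := by
    rw [hCRdef, Finset.sum_mul]
    refine Finset.sum_le_sum fun t _ => ?_
    rw [hwdef]
    simp only
    rw [abs_mul, abs_pow, abs_of_nonneg hkpos.le]
    exact mul_le_mul_of_nonneg_left
      (pow_le_pow_right₀ hk1 (Finset.le_sup (Finset.mem_univ t.1))) (abs_nonneg _)
  have hHb2 : |∑ t ∈ idx, w k t * (q:ℝ)^(rr k t)| ≤ (CR + 1) * (k:ℝ)^M * (q:ℝ)^ρ := by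
    refine le_trans hHb ?_
    refine mul_le_mul_of_nonneg_right ?_ (Real.rpow_nonneg hqpos.le _)
    refine le_trans hW ?_
    have hkM : (0:ℝ) ≤ (k:ℝ)^M := pow_nonneg hkpos.le M
    nlinarith
  have hgeq : g q k = (Y q : ℝ) * (∑ t ∈ idx, w k t * (q:ℝ)^(rr k t)) / Sp.eval (q:ℝ) := by
    rw [eq_div_iff (hSpne' q hq)]
    linarith [hgH k q hq]
  rw [hgeq, abs_div, abs_mul, Nat.abs_cast]
  have hnum : (Y q : ℝ) * |∑ t ∈ idx, w k t * (q:ℝ)^(rr k t)|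
      ≤ (C₂ * (q:ℝ)^d) * ((CR + 1) * (k:ℝ)^M * (q:ℝ)^ρ) :=
    mul_le_mul (hY q hqQ) hHb2 (abs_nonneg _) (mul_nonneg hC₂.le (pow_nonneg hqpos.le d))
  have hfrac : (Y q : ℝ) * |∑ t ∈ idx, w k t * (q:ℝ)^(rr k t)| / |Sp.eval (q:ℝ)|
      ≤ (C₂ * (q:ℝ)^d) * ((CR + 1) * (k:ℝ)^M * (q:ℝ)^ρ) / (cS * (q:ℝ)^s) :=
    div_le_div₀ (mul_nonneg (mul_nonneg hC₂.le (pow_nonneg hqpos.le d))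
        (mul_nonneg (mul_nonneg (by linarith : (0:ℝ) ≤ CR + 1) (pow_nonneg hkpos.le M))
          (Real.rpow_nonneg hqpos.le _)))
      hnum (mul_pos hcS (pow_pos hqpos s)) (hSplow q hq)
  refine le_trans hfrac (le_of_eq ?_)
  rw [hρdef, ← Real.rpow_natCast (q:ℝ) s, ← Real.rpow_natCast (q:ℝ) d]
  have h2 : (q:ℝ)^((d:ℕ):ℝ) * (q:ℝ)^(((s:ℕ):ℝ)-((d:ℕ):ℝ)) / (q:ℝ)^((s:ℕ):ℝ) = 1 := by
    rw [← Real.rpow_add hqpos, ← Real.rpow_sub hqpos]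
    norm_num
  calc C₂ * (q:ℝ)^((d:ℕ):ℝ) * ((CR + 1) * (k:ℝ)^M * (q:ℝ)^(((s:ℕ):ℝ)-((d:ℕ):ℝ)))
        / (cS * (q:ℝ)^((s:ℕ):ℝ))
      = (C₂ * (CR+1) / cS) * (k:ℝ)^M
          * ((q:ℝ)^((d:ℕ):ℝ) * (q:ℝ)^(((s:ℕ):ℝ)-((d:ℕ):ℝ)) / (q:ℝ)^((s:ℕ):ℝ)) := by
        have h3 : cS ≠ 0 := ne_of_gt hcS
        have h4 : (q:ℝ)^(((s:ℕ)):ℝ) ≠ 0 := ne_of_gt (Real.rpow_pos_of_pos hqpos _)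
        field_simp
    _ = C₂ * (CR+1) / cS * (k:ℝ)^M := by rw [h2, mul_one]
end

section
/- Let d ∈ ℕ, let C₁, C₂ > 0 be real numbers, let Q ⊆ ℕ be an unbounded set, let Y : ℕ → ℕ satisfy Y(q) ≤ C₂·q^d for all q ∈ Q, and suppose there is an unbounded subset Q' ⊆ Q with C₁·q^d ≤ Y(q) for all q ∈ Q'. Let b₁ < b₂ < … < b_N be natural numbers and let c₁, …, c_N : ℕ → ℝ be real rational functions, i.e. for each i there exist real polynomials P_i, S_i with S_i ≠ 0 such that c_i(q) = P_i(q)/S_i(q) for all sufficiently large q. Define H(q, k) := Σ_{i=1}^{N} Y(q) · c_i(q) · k^{b_i}. Assume that for every real δ > 0 there is k₀ such that for every integer k ≥ k₀, q^{−δ}·H(q, k) → 0 as q → ∞ along Q. Then there exist a constant C'' > 0 and q₀ ∈ ℕ such that |Y(q)·c_i(q)| ≤ C'' for every 1 ≤ i ≤ N and every q ∈ Q with q ≥ q₀. -/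
open Filter Polynomial Matrix

/-- A real function tending to a finite limit at `atTop` is eventually bounded in abs. -/
lemma aux_tendsto_bounded {f : ℝ → ℝ} {L : ℝ} (h : Tendsto f atTop (nhds L)) :
    ∃ x₀ : ℝ, ∀ x : ℝ, x₀ ≤ x → |f x| ≤ |L| + 1 := by
  have h2 : ∀ᶠ x in atTop, dist (f x) L < 1 := h (Metric.ball_mem_nhds L one_pos)
  obtain ⟨x₀, hx₀⟩ := eventually_atTop.mp h2
  refine ⟨x₀, fun x hx => ?_⟩
  have := hx₀ x hx
  rw [Real.dist_eq] at this
  have h3 : |f x| - |L| ≤ |f x - L| := abs_sub_abs_le_abs_sub _ _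
  linarith

/-- A real function tending to a nonzero finite limit at `atTop` is eventually bounded
below in abs. -/
lemma aux_tendsto_lower {f : ℝ → ℝ} {L : ℝ} (h : Tendsto f atTop (nhds L)) (hL : L ≠ 0) :
    ∃ η : ℝ, 0 < η ∧ ∃ x₀ : ℝ, ∀ x : ℝ, x₀ ≤ x → η ≤ |f x| := by
  have hL2 : 0 < |L| / 2 := by positivity
  have h2 : ∀ᶠ x in atTop, dist (f x) L < |L| / 2 := h (Metric.ball_mem_nhds L hL2)
  obtain ⟨x₀, hx₀⟩ := eventually_atTop.mp h2
  refine ⟨|L| / 2, hL2, x₀, fun x hx => ?_⟩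
  have := hx₀ x hx
  rw [Real.dist_eq] at this
  have h3 : |L| - |f x| ≤ |L - f x| := abs_sub_abs_le_abs_sub _ _
  rw [abs_sub_comm] at h3
  linarith

theorem stmt8 (d : ℕ) (C₁ C₂ : ℝ) (hC₁ : 0 < C₁) (hC₂ : 0 < C₂)
    (Q : Set ℕ) (hQ : ∀ n : ℕ, ∃ q ∈ Q, n ≤ q)
    (Y : ℕ → ℕ) (hY : ∀ q ∈ Q, (Y q : ℝ) ≤ C₂ * (q : ℝ) ^ d)
    (Q' : Set ℕ) (hQ'sub : Q' ⊆ Q) (hQ' : ∀ n : ℕ, ∃ q ∈ Q', n ≤ q)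
    (hYlow : ∀ q ∈ Q', C₁ * (q : ℝ) ^ d ≤ (Y q : ℝ))
    (N : ℕ) (b : Fin N → ℕ) (hb : StrictMono b)
    (c : Fin N → ℕ → ℝ)
    (hc : ∀ i, ∃ P S : Polynomial ℝ, S ≠ 0 ∧ ∃ q₀ : ℕ, ∀ q : ℕ, q₀ ≤ q →
      c i q = P.eval (q : ℝ) / S.eval (q : ℝ))
    (H : ℕ → ℕ → ℝ)
    (hH : ∀ q k, H q k = ∑ i, (Y q : ℝ) * c i q * (k : ℝ) ^ (b i))
    (hlim : ∀ δ : ℝ, 0 < δ → ∃ k₀ : ℕ, ∀ k : ℕ, k₀ ≤ k → ∀ ε : ℝ, 0 < ε →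
      ∃ q₁ : ℕ, ∀ q ∈ Q, q₁ ≤ q → |(q : ℝ) ^ (-δ) * H q k| < ε) :
    ∃ C'' : ℝ, 0 < C'' ∧ ∃ q₀ : ℕ, ∀ i : Fin N, ∀ q ∈ Q, q₀ ≤ q →
      |(Y q : ℝ) * c i q| ≤ C'' := by
  obtain ⟨k₀, hk₀⟩ := hlim 1 one_pos
  set t : ℕ := k₀ + 2 with ht_def
  have ht1 : (1 : ℝ) < (t : ℝ) := by
    have : (1 : ℕ) < t := by omega
    exact_mod_cast this
  set v : Fin N → ℝ := fun i => (t : ℝ) ^ (b i) with hv_def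
  have hvmono : StrictMono v := fun i j hij => pow_lt_pow_right₀ ht1 (hb hij)
  set A : Matrix (Fin N) (Fin N) ℝ := Matrix.of (fun i j => v i ^ ((j : ℕ) + 1)) with hA_def
  have hA : A = Matrix.diagonal v * Matrix.vandermonde v := by
    ext i j
    rw [Matrix.diagonal_mul]
    simp [hA_def, Matrix.vandermonde, pow_succ']
  have hvne : ∀ i, v i ≠ 0 := fun i => by positivity
  have hdetA : IsUnit A.det := by
    rw [isUnit_iff_ne_zero, hA, Matrix.det_mul, Matrix.det_diagonal]
    refine mul_ne_zero (Finset.prod_ne_zero_iff.mpr fun i _ => hvne i) ?_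
    exact Matrix.det_vandermonde_ne_zero_iff.mpr hvmono.injective
  have hdetAT : IsUnit Aᵀ.det := by rwa [Matrix.det_transpose]
  set B : Matrix (Fin N) (Fin N) ℝ := Aᵀ⁻¹ with hB_def
  -- inversion: recover coefficients from values of H
  have hkey : ∀ q : ℕ, (fun i => (Y q : ℝ) * c i q) =
      B *ᵥ (fun j : Fin N => H q (t ^ ((j : ℕ) + 1))) := by
    intro q
    have h1 : Aᵀ *ᵥ (fun i => (Y q : ℝ) * c i q) =
        (fun j : Fin N => H q (t ^ ((j : ℕ) + 1))) := by
      funext j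
      rw [hH]
      simp only [Matrix.mulVec, dotProduct, Matrix.transpose_apply]
      refine Finset.sum_congr rfl fun i _ => ?_
      have hcast : ((t ^ ((j : ℕ) + 1) : ℕ) : ℝ) = (t : ℝ) ^ ((j : ℕ) + 1) := by push_cast; ring
      rw [hcast, hA_def]
      simp only [Matrix.of_apply, hv_def]
      rw [← pow_mul, ← pow_mul, mul_comm (b i)]
      ring
    rw [← h1, Matrix.mulVec_mulVec, hB_def, Matrix.nonsing_inv_mul _ hdetAT, Matrix.one_mulVec]
  -- key smallness: each coefficient is o(q) along Q
  have hsmall : ∀ i : Fin N, ∀ ε : ℝ, 0 < ε → ∃ q₁ : ℕ, ∀ q ∈ Q, q₁ ≤ q →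
      |(Y q : ℝ) * c i q| ≤ ε * q := by
    intro i ε hε
    set K : ℝ := ∑ j : Fin N, |B i j| with hK_def
    have hK0 : 0 ≤ K := Finset.sum_nonneg fun j _ => abs_nonneg _
    have hε' : 0 < ε / (K + 1) := by positivity
    have hchoice : ∀ j : Fin N, ∃ q₁ : ℕ, ∀ q ∈ Q, q₁ ≤ q →
        |(q : ℝ) ^ (-(1:ℝ)) * H q (t ^ ((j : ℕ) + 1))| < ε / (K + 1) := by
      intro j
      refine hk₀ (t ^ ((j : ℕ) + 1)) ?_ _ hε'
      calc k₀ ≤ t := by omega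
        _ ≤ t ^ ((j : ℕ) + 1) := Nat.le_self_pow (Nat.succ_ne_zero _) t
    choose f hf using hchoice
    refine ⟨max 1 (Finset.univ.sup f), fun q hqQ hq => ?_⟩
    have hq1 : 1 ≤ q := le_trans (le_max_left _ _) hq
    have hqR : (1 : ℝ) ≤ (q : ℝ) := by exact_mod_cast hq1
    have hqpos : (0 : ℝ) < (q : ℝ) := by linarith
    have hHb : ∀ j : Fin N, |H q (t ^ ((j : ℕ) + 1))| ≤ ε / (K + 1) * q := by
      intro j
      have hfj : f j ≤ q := le_trans (le_trans (Finset.le_sup (Finset.mem_univ j))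
        (le_max_right _ _)) hq
      have h2 := hf j q hqQ hfj
      rw [Real.rpow_neg_one, abs_mul, abs_inv, abs_of_pos hqpos] at h2
      have h3 : (q : ℝ)⁻¹ * |H q (t ^ ((j : ℕ) + 1))| < ε / (K + 1) := h2
      calc |H q (t ^ ((j : ℕ) + 1))| = (q : ℝ) * ((q : ℝ)⁻¹ * |H q (t ^ ((j : ℕ) + 1))|) := by
            field_simp
        _ ≤ (q : ℝ) * (ε / (K + 1)) := by
            apply mul_le_mul_of_nonneg_left h3.le hqpos.le
        _ = ε / (K + 1) * q := by ring
    have h4 : (Y q : ℝ) * c i q = ∑ j, B i j * H q (t ^ ((j : ℕ) + 1)) := by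
      have := congrFun (hkey q) i
      simpa [Matrix.mulVec, dotProduct] using this
    rw [h4]
    calc |∑ j, B i j * H q (t ^ ((j : ℕ) + 1))| ≤ ∑ j, |B i j * H q (t ^ ((j : ℕ) + 1))| :=
          Finset.abs_sum_le_sum_abs _ _
      _ ≤ ∑ j, |B i j| * (ε / (K + 1) * q) := by
          refine Finset.sum_le_sum fun j _ => ?_
          rw [abs_mul]
          exact mul_le_mul_of_nonneg_left (hHb j) (abs_nonneg _)
      _ = K * (ε / (K + 1) * q) := by rw [← Finset.sum_mul]
      _ ≤ ε * q := by
          rw [← mul_assoc]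
          apply mul_le_mul_of_nonneg_right _ hqpos.le
          rw [mul_div_assoc']
          rw [div_le_iff₀ (by linarith)]
          nlinarith
  -- per-index eventual boundedness
  have hmain : ∀ i : Fin N, ∃ C : ℝ, 0 < C ∧ ∃ q₂ : ℕ, ∀ q ∈ Q, q₂ ≤ q →
      |(Y q : ℝ) * c i q| ≤ C := by
    intro i
    obtain ⟨P, S, hS, q₀i, hPS⟩ := hc i
    by_cases hP : P = 0
    · refine ⟨1, one_pos, q₀i, fun q hqQ hq => ?_⟩
      rw [hPS q hq, hP]
      simp
    · set T : Polynomial ℝ := X ^ d * P with hT_def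
      have hT : T ≠ 0 := mul_ne_zero (pow_ne_zero _ X_ne_zero) hP
      have hTeval : ∀ x : ℝ, T.eval x = x ^ d * P.eval x := fun x => by
        simp [hT_def]
      -- relation between the coefficient and T/S
      have hrel : ∀ q : ℕ, q₀i ≤ q → (Y q : ℝ) ≥ 0 ∧
          |(Y q : ℝ) * c i q| = (Y q : ℝ) * (|P.eval (q : ℝ)| / |S.eval (q : ℝ)|) := by
        intro q hq
        refine ⟨Nat.cast_nonneg _, ?_⟩
        rw [hPS q hq, abs_mul, abs_of_nonneg (Nat.cast_nonneg (Y q)), abs_div]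
      have hTabs : ∀ q : ℕ, ((q : ℝ)) ^ d * (|P.eval (q : ℝ)| / |S.eval (q : ℝ)|) =
          |T.eval (q : ℝ) / S.eval (q : ℝ)| := by
        intro q
        rw [abs_div, hTeval, abs_mul, abs_pow, abs_of_nonneg (show (0:ℝ) ≤ (q:ℝ) by positivity)]
        ring
      by_cases hdeg : T.degree ≤ S.degree
      · -- bounded case
        have hTend : ∃ L : ℝ, Tendsto (fun x => T.eval x / S.eval x) atTop (nhds L) := by
          rcases lt_or_eq_of_le hdeg with h | h
          · exact ⟨0, div_tendsto_zero_of_degree_lt T S h⟩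
          · exact ⟨_, div_tendsto_leadingCoeff_div_of_degree_eq T S h⟩
        obtain ⟨L, hL⟩ := hTend
        obtain ⟨x₀, hx₀⟩ := aux_tendsto_bounded hL
        refine ⟨C₂ * (|L| + 1), by positivity, max q₀i ⌈x₀⌉₊, fun q hqQ hq => ?_⟩
        have hq1 : q₀i ≤ q := le_trans (le_max_left _ _) hq
        have hq2 : x₀ ≤ (q : ℝ) := le_trans (Nat.le_ceil x₀) (by
          exact_mod_cast le_trans (le_max_right _ _) hq)
        obtain ⟨hY0, heq⟩ := hrel q hq1
        rw [heq]
        have hPSnn : 0 ≤ |P.eval (q : ℝ)| / |S.eval (q : ℝ)| := by positivity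
        calc (Y q : ℝ) * (|P.eval (q : ℝ)| / |S.eval (q : ℝ)|)
            ≤ (C₂ * (q : ℝ) ^ d) * (|P.eval (q : ℝ)| / |S.eval (q : ℝ)|) :=
              mul_le_mul_of_nonneg_right (hY q hqQ) hPSnn
          _ = C₂ * |T.eval (q : ℝ) / S.eval (q : ℝ)| := by rw [mul_assoc, hTabs]
          _ ≤ C₂ * (|L| + 1) := mul_le_mul_of_nonneg_left (hx₀ _ hq2) hC₂.le
      · -- unbounded case: contradiction
        exfalso
        push_neg at hdeg
        set S' : Polynomial ℝ := X * S with hS'_def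
        have hS' : S' ≠ 0 := mul_ne_zero X_ne_zero hS
        have hnd : S.natDegree < T.natDegree := natDegree_lt_natDegree hS hdeg
        have hndS' : S'.natDegree = S.natDegree + 1 := by
          rw [hS'_def, natDegree_mul X_ne_zero hS, natDegree_X]; ring
        have hle : S'.natDegree ≤ T.natDegree := by omega
        have hlower : ∃ η : ℝ, 0 < η ∧ ∃ x₀ : ℝ, ∀ x : ℝ, x₀ ≤ x →
            η ≤ |T.eval x / S'.eval x| := by
          rcases lt_or_eq_of_le hle with h | h
          · have hdeg' : S'.degree < T.degree := by
              rw [degree_eq_natDegree hS', degree_eq_natDegree hT]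
              exact_mod_cast h
            have := abs_div_tendsto_atTop_of_degree_gt T S' hdeg' hS'
            obtain ⟨x₀, hx₀⟩ := eventually_atTop.mp (this.eventually_ge_atTop 1)
            exact ⟨1, one_pos, x₀, hx₀⟩
          · have hdeg' : T.degree = S'.degree := by
              rw [degree_eq_natDegree hS', degree_eq_natDegree hT]
              exact_mod_cast h.symm
            have hL0 : T.leadingCoeff / S'.leadingCoeff ≠ 0 :=
              div_ne_zero (leadingCoeff_ne_zero.mpr hT) (leadingCoeff_ne_zero.mpr hS')
            obtain ⟨η, hη, x₀, hx₀⟩ :=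
              aux_tendsto_lower (div_tendsto_leadingCoeff_div_of_degree_eq T S' hdeg') hL0
            exact ⟨η, hη, x₀, hx₀⟩
        obtain ⟨η, hη, x₀, hx₀⟩ := hlower
        obtain ⟨q₁, hq₁⟩ := hsmall i (C₁ * η / 2) (by positivity)
        obtain ⟨q, hqQ', hqge⟩ := hQ' (max (max q₁ q₀i) (max 1 ⌈x₀⌉₊))
        have hqQ : q ∈ Q := hQ'sub hqQ'
        have hq1 : q₁ ≤ q := le_trans (le_trans (le_max_left _ _) (le_max_left _ _)) hqge
        have hq2 : q₀i ≤ q := le_trans (le_trans (le_max_right _ _) (le_max_left _ _)) hqge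
        have hq3 : 1 ≤ q := le_trans (le_trans (le_max_left _ _) (le_max_right _ _)) hqge
        have hq4 : x₀ ≤ (q : ℝ) := le_trans (Nat.le_ceil x₀) (by
          exact_mod_cast le_trans (le_trans (le_max_right _ _) (le_max_right _ _)) hqge)
        have hqR : (1 : ℝ) ≤ (q : ℝ) := by exact_mod_cast hq3
        have hqpos : (0 : ℝ) < (q : ℝ) := by linarith
        -- lower bound on the coefficient
        obtain ⟨hY0, heq⟩ := hrel q hq2
        have hdivrel : |T.eval (q : ℝ) / S.eval (q : ℝ)| =
            (q : ℝ) * |T.eval (q : ℝ) / S'.eval (q : ℝ)| := by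
          have hSe : S'.eval (q : ℝ) = (q : ℝ) * S.eval (q : ℝ) := by simp [hS'_def]
          rw [hSe, mul_comm (q : ℝ) (S.eval (q : ℝ)), ← div_div, abs_div
            (T.eval (q : ℝ) / S.eval (q : ℝ)), abs_of_pos hqpos]
          field_simp
        have hlow : C₁ * η * (q : ℝ) ≤ |(Y q : ℝ) * c i q| := by
          rw [heq]
          have h5 : C₁ * ((q:ℝ) ^ d * (|P.eval (q : ℝ)| / |S.eval (q : ℝ)|)) ≤
              (Y q : ℝ) * (|P.eval (q : ℝ)| / |S.eval (q : ℝ)|) := by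
            rw [← mul_assoc]
            exact mul_le_mul_of_nonneg_right (hYlow q hqQ') (by positivity)
          rw [hTabs, hdivrel] at h5
          have h6 : η ≤ |T.eval (q : ℝ) / S'.eval (q : ℝ)| := hx₀ _ hq4
          have h7 : C₁ * (q : ℝ) * η ≤ C₁ * (q : ℝ) * |T.eval (q : ℝ) / S'.eval (q : ℝ)| :=
            mul_le_mul_of_nonneg_left h6 (by positivity)
          linarith
        have hup : |(Y q : ℝ) * c i q| ≤ C₁ * η / 2 * q := hq₁ q hqQ hq1
        have hpos : 0 < C₁ * η * (q : ℝ) := by positivity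
        linarith
  choose C hCpos q₂ hC using hmain
  have hsum : 0 ≤ ∑ i, C i := Finset.sum_nonneg fun i _ => (hCpos i).le
  refine ⟨1 + ∑ i, C i, by linarith, Finset.univ.sup q₂, fun i q hqQ hq => ?_⟩
  have h1 : |(Y q : ℝ) * c i q| ≤ C i :=
    hC i q hqQ (le_trans (Finset.le_sup (Finset.mem_univ i)) hq)
  have h2 : C i ≤ ∑ j, C j :=
    Finset.single_le_sum (fun j _ => (hCpos j).le) (Finset.mem_univ i)
  linarith
end

section
/- Let p be a prime, let n, m ≥ 1 be integers, let φ₁, …, φ_m ∈ ℤ[x₁, …, x_n] be polynomials with integer coefficients, and let Φ : ℤ_p^n → ℤ_p^m be the induced polynomial map. Let μ_n denote the Haar probability measure on ℤ_p^n. Then for every integer k ≥ 1 and every y ∈ (ℤ/p^kℤ)^m, the pushforward measure satisfies (Measure.map Φ μ_n)({z ∈ ℤ_p^m : r_k(z) = y}) = p^{−k·n} · #{x ∈ (ℤ/p^kℤ)^n : φ̄(x) = y}, where φ̄ : (ℤ/p^kℤ)^n → (ℤ/p^kℤ)^m is the map induced by the polynomials φ₁, …, φ_m reduced modulo p^k.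 -/
open MeasureTheory ENNReal

/-- The Borel σ-algebra on the `p`-adic integers. -/
noncomputable instance (p : ℕ) [Fact p.Prime] : MeasurableSpace (PadicInt p) := borel _

instance (p : ℕ) [Fact p.Prime] : BorelSpace (PadicInt p) := ⟨rfl⟩

section Aux

variable (p : ℕ) [Fact p.Prime] (k : ℕ)

/-- The fiber of `toZModPow k` over `toZModPow k a₀` is a closed ball. -/
lemma fiber_eq_closedBall (a₀ : PadicInt p) :
    {x : PadicInt p | PadicInt.toZModPow k x = PadicInt.toZModPow k a₀}
      = Metric.closedBall a₀ ((p : ℝ) ^ (-(k : ℤ))) := by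
  ext x
  simp only [Set.mem_setOf_eq, Metric.mem_closedBall, dist_eq_norm]
  rw [PadicInt.norm_le_pow_iff_mem_span_pow, ← PadicInt.ker_toZModPow, RingHom.mem_ker,
    map_sub, sub_eq_zero]

lemma fiber_measurable (c : ZMod (p ^ k)) :
    MeasurableSet {x : PadicInt p | PadicInt.toZModPow k x = c} := by
  have hsurj : PadicInt.toZModPow (p := p) k (((c.val : ℕ) : PadicInt p)) = c := by
    rw [map_natCast, ZMod.natCast_zmod_val]
  have : {x : PadicInt p | PadicInt.toZModPow k x = c}
      = {x : PadicInt p | PadicInt.toZModPow k x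
          = PadicInt.toZModPow k (((c.val : ℕ) : PadicInt p))} := by
    rw [hsurj]
  rw [this, fiber_eq_closedBall]
  exact Metric.isClosed_closedBall.measurableSet

variable (n : ℕ)

/-- The fiber of coordinatewise reduction. -/
def redFiber (c : Fin n → ZMod (p ^ k)) : Set (Fin n → PadicInt p) :=
  {x | (fun i => PadicInt.toZModPow k (x i)) = c}

lemma redFiber_measurable (c : Fin n → ZMod (p ^ k)) :
    MeasurableSet (redFiber p k n c) := by
  have : redFiber p k n c
      = ⋂ i, (fun x : Fin n → PadicInt p => x i) ⁻¹'
          {a : PadicInt p | PadicInt.toZModPow k a = c i} := by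
    ext x
    simp [redFiber, funext_iff]
  rw [this]
  exact MeasurableSet.iInter fun i =>
    (measurable_pi_apply i) (fiber_measurable p k (c i))

lemma redFiber_measure (μn : Measure (Fin n → PadicInt p)) [μn.IsAddHaarMeasure]
    [IsProbabilityMeasure μn] (c : Fin n → ZMod (p ^ k)) :
    μn (redFiber p k n c) = ((p : ℝ≥0∞) ^ (k * n))⁻¹ := by
  -- all fibers have the same measure
  have htrans : ∀ c : Fin n → ZMod (p ^ k),
      μn (redFiber p k n c) = μn (redFiber p k n 0) := by
    intro c
    set a : Fin n → PadicInt p := fun i => (((c i).val : ℕ) : PadicInt p) with ha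
    have hac : ∀ i, PadicInt.toZModPow (p := p) k (a i) = c i := by
      intro i; rw [ha, map_natCast, ZMod.natCast_zmod_val]
    have hpre : redFiber p k n 0 = (fun x => a + x) ⁻¹' (redFiber p k n c) := by
      ext x
      simp only [redFiber, Set.mem_preimage, Set.mem_setOf_eq, funext_iff]
      constructor
      · intro h i
        simp only [Pi.add_apply, map_add, hac i, h i, Pi.zero_apply, add_zero]
      · intro h i
        have := h i
        simp only [Pi.add_apply, map_add, hac i] at this
        have : PadicInt.toZModPow k (x i) = 0 := by
          have := congrArg (fun z => z - c i) this
          simpa using this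
        simpa using this
    rw [hpre, measure_preimage_add]
  -- the fibers partition the space
  have hcard : (Fintype.card (Fin n → ZMod (p ^ k)) : ℝ≥0∞) = (p : ℝ≥0∞) ^ (k * n) := by
    rw [Fintype.card_fun, ZMod.card, Fintype.card_fin]
    push_cast
    rw [← pow_mul]
  have hsum : (Fintype.card (Fin n → ZMod (p ^ k)) : ℝ≥0∞) * μn (redFiber p k n 0) = 1 := by
    have hunion : (⋃ c : Fin n → ZMod (p ^ k), redFiber p k n c) = Set.univ := by
      ext x
      simp only [Set.mem_iUnion, Set.mem_univ, iff_true]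
      exact ⟨fun i => PadicInt.toZModPow k (x i), rfl⟩
    have hdisj : Pairwise (Function.onFun Disjoint (redFiber p k n)) := by
      intro c c' hcc'
      simp only [Function.onFun, Set.disjoint_left]
      rintro x rfl rfl
      exact hcc' rfl
    have := measure_iUnion (μ := μn) hdisj (fun c => redFiber_measurable p k n c)
    rw [hunion, measure_univ] at this
    rw [this, tsum_fintype]
    simp only [htrans]
    rw [Finset.sum_const, nsmul_eq_mul]
    simp
  have hne : (Fintype.card (Fin n → ZMod (p ^ k)) : ℝ≥0∞) ≠ 0 :=
    Nat.cast_ne_zero.mpr Fintype.card_ne_zero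
  have htop : (Fintype.card (Fin n → ZMod (p ^ k)) : ℝ≥0∞) ≠ ⊤ := by
    simp
  have h0 : μn (redFiber p k n 0) = ((p : ℝ≥0∞) ^ (k * n))⁻¹ := by
    rw [← hcard]
    exact (ENNReal.eq_inv_of_mul_eq_one_left (by rwa [mul_comm] at hsum)).symm ▸ rfl
  rw [htrans c, h0]

end Aux

theorem stmt9 (p : ℕ) [Fact p.Prime] (n m : ℕ) (hn : 1 ≤ n) (hm : 1 ≤ m)
    (φ : Fin m → MvPolynomial (Fin n) ℤ)
    -- the induced polynomial map Φ : ℤ_p^n → ℤ_p^m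
    (Φ : (Fin n → PadicInt p) → (Fin m → PadicInt p))
    (hΦ : ∀ x j, Φ x j = MvPolynomial.aeval x (φ j))
    -- the Haar probability measure on ℤ_p^n
    (μn : Measure (Fin n → PadicInt p)) [μn.IsAddHaarMeasure] [IsProbabilityMeasure μn]
    (k : ℕ) (hk : 1 ≤ k) (y : Fin m → ZMod (p ^ k)) :
    Measure.map Φ μn {z : Fin m → PadicInt p | (fun j => PadicInt.toZModPow k (z j)) = y}
      = ((p : ℝ≥0∞) ^ (k * n))⁻¹ *
        (Nat.card {x : Fin n → ZMod (p ^ k) //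
          (fun j => MvPolynomial.aeval x (φ j)) = y} : ℝ≥0∞) := by
  classical
  -- Φ is continuous, hence measurable
  have hΦcont : Continuous Φ := by
    have : Φ = fun x j => MvPolynomial.aeval x (φ j) := by
      funext x j; exact hΦ x j
    rw [this]
    refine continuous_pi fun j => ?_
    have : (fun x : Fin n → PadicInt p => (MvPolynomial.aeval x) (φ j))
        = fun x => MvPolynomial.eval x
            (MvPolynomial.map (algebraMap ℤ (PadicInt p)) (φ j)) := by
      funext x
      rw [MvPolynomial.aeval_def, MvPolynomial.eval_map]
    rw [this]
    exact MvPolynomial.continuous_eval _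
  have hΦmeas : Measurable Φ := hΦcont.measurable
  -- the target set is measurable
  have hSmeas : MeasurableSet
      {z : Fin m → PadicInt p | (fun j => PadicInt.toZModPow k (z j)) = y} :=
    redFiber_measurable p k m y
  rw [Measure.map_apply hΦmeas hSmeas]
  -- commutation of reduction with the polynomial map
  have hcomm : ∀ (x : Fin n → PadicInt p) (j : Fin m),
      PadicInt.toZModPow k (MvPolynomial.aeval x (φ j))
        = MvPolynomial.aeval (fun i => PadicInt.toZModPow k (x i)) (φ j) := by
    intro x j
    exact MvPolynomial.comp_aeval_apply (R := ℤ) (f := x) (PadicInt.toZModPow (p := p) k).toIntAlgHom (φ j)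
  -- decompose the preimage into fibers of reduction
  have hpre : Φ ⁻¹' {z : Fin m → PadicInt p | (fun j => PadicInt.toZModPow k (z j)) = y}
      = ⋃ c ∈ Finset.univ.filter
          (fun c : Fin n → ZMod (p ^ k) => (fun j => MvPolynomial.aeval c (φ j)) = y),
          redFiber p k n c := by
    ext x
    simp only [Set.mem_preimage, Set.mem_setOf_eq, Set.mem_iUnion, Finset.mem_filter,
      Finset.mem_univ, true_and, redFiber]
    constructor
    · intro h
      refine ⟨fun i => PadicInt.toZModPow k (x i), ?_, rfl⟩
      funext j
      rw [← hcomm x j, ← hΦ x j]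
      exact congrFun h j
    · rintro ⟨c, hc, rfl⟩
      funext j
      rw [hΦ x j, hcomm x j]
      exact congrFun hc j
  rw [hpre, measure_biUnion_finset ?_ ?_]
  · simp only [redFiber_measure p k n μn]
    rw [Finset.sum_const, nsmul_eq_mul, mul_comm]
    congr 1
    rw [Nat.card_eq_fintype_card, Fintype.card_subtype]
  · intro c hc c' hc' hcc'
    simp only [Set.disjoint_left, redFiber]
    rintro x rfl rfl
    exact hcc' rfl
  · intro c hc
    exact redFiber_measurable p k n c
end

section
/- Let p be a prime, let n, m ≥ 1 be integers, let φ₁, …, φ_m ∈ ℤ[x₁, …, x_n] be polynomials with integer coefficients, and let Φ : ℤ_p^n → ℤ_p^m be the induced polynomial map. Let μ_n and μ_m denote the Haar probability measures on ℤ_p^n and ℤ_p^m respectively. Suppose there is a constant C > 0 such that for every integer k ≥ 1 and every y ∈ (ℤ/p^kℤ)^m, one has #{x ∈ (ℤ/p^kℤ)^n : φ̄(x) = y} ≤ C · p^{k·(n−m)}, where φ̄ : (ℤ/p^kℤ)^n → (ℤ/p^kℤ)^m is the map induced by the polynomials reduced modulo p^k. Then the pushforward measure Measure.map Φ μ_n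 is at most C · μ_m, i.e. (Measure.map Φ μ_n)(A) ≤ C · μ_m(A) for every Borel set A ⊆ ℤ_p^m; in particular Measure.map Φ μ_n has density bounded by C with respect to μ_m. -/
/-!
Reduction modulo `p ^ k` cuts `ℤ_p^r` into `p ^ (k r)` cosets of an open subgroup, namely the
closed balls of radius `p ^ (-k)`, so each has Haar measure `p ^ (-k r)`. Reduction commutes with
`Φ`, so the `Φ`-preimage of such a ball in `ℤ_p^m` is the union of the balls in `ℤ_p^n` over a
fibre of `φ̄`; the fibre bound therefore gives `Φ_* μ_n ≤ C μ_m` on balls, hence on open sets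
(monotone unions of finitely many balls of a fixed radius), hence everywhere by outer regularity.
-/

open MeasureTheory ENNReal

theorem AddMonoidHom.card_mul_measure_preimage_singleton {G H : Type*} [AddGroup G]
    [MeasurableSpace G] [MeasurableAdd G] [AddGroup H] [Finite H] {f : G →+ H}
    (hf : Function.Surjective f) (hker : MeasurableSet (f.ker : Set G))
    (μ : Measure G) [μ.IsAddLeftInvariant] (y : H) :
    Nat.card H * μ (f ⁻¹' {y}) = μ Set.univ := by
  obtain ⟨a, rfl⟩ := hf y
  have hfiber : f ⁻¹' {f a} = (fun x => -a + x) ⁻¹' f.ker := by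
    ext x
    simp [eq_neg_add_iff_add_eq, eq_comm]
  have hindex : f.ker.index = Nat.card H := by
    rw [AddSubgroup.index_ker, AddMonoidHom.range_eq_top.2 hf, AddSubgroup.card_top]
  have : f.ker.FiniteIndex := ⟨by rw [hindex]; exact Nat.card_pos.ne'⟩
  rw [hfiber, measure_preimage_add, ← f.ker.index_mul_measure hker, hindex]

section FiniteFibres

variable {X H : Type*} [MeasurableSpace X] [Finite H] {f : X → H}

theorem measure_preimage_eq_card_mul (μ : Measure X) (hf : ∀ y, MeasurableSet (f ⁻¹' {y}))
    {a : ℝ≥0∞} (h : ∀ y, μ (f ⁻¹' {y}) = a) (T : Set H) :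
    μ (f ⁻¹' T) = Nat.card T * a := by
  have := Fintype.ofFinite H
  classical
  rw [← T.coe_toFinset, ← sum_measure_preimage_singleton _ fun y _ => hf y]
  simp [h]

theorem measure_preimage_le_mul_of_forall_singleton (ν μ : Measure X)
    (hf : ∀ y, MeasurableSet (f ⁻¹' {y})) {c : ℝ≥0∞}
    (h : ∀ y, ν (f ⁻¹' {y}) ≤ c * μ (f ⁻¹' {y})) (T : Set H) :
    ν (f ⁻¹' T) ≤ c * μ (f ⁻¹' T) := by
  have := Fintype.ofFinite H
  classical
  rw [← T.coe_toFinset, ← sum_measure_preimage_singleton _ fun y _ => hf y,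
    ← sum_measure_preimage_singleton _ fun y _ => hf y, Finset.mul_sum]
  exact Finset.sum_le_sum fun y _ => h y

end FiniteFibres

theorem MeasureTheory.Measure.le_of_forall_isOpen_le {X : Type*} [TopologicalSpace X]
    [MeasurableSpace X] {ν ρ : Measure X} [ρ.OuterRegular]
    (h : ∀ U, IsOpen U → ν U ≤ ρ U) : ν ≤ ρ := by
  intro A
  refine ENNReal.le_of_forall_pos_le_add fun ε hε _ => ?_
  obtain ⟨U, hAU, hU, hρU⟩ := A.exists_isOpen_le_add ρ (ENNReal.coe_ne_zero.2 hε.ne')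
  exact (measure_mono hAU).trans ((h U hU).trans hρU)

theorem MvPolynomial.continuous_aeval {R S σ : Type*} [CommSemiring R] [CommSemiring S]
    [Algebra R S] [TopologicalSpace S] [IsTopologicalSemiring S] (q : MvPolynomial σ R) :
    Continuous fun x : σ → S => aeval x q := by
  simp_rw [aeval_def, ← eval_map]
  exact continuous_eval _

theorem RingHom.compLeft_comp_aeval {R S σ ι : Type*} [CommRing R] [CommRing S] (f : R →+* S)
    (φ : ι → MvPolynomial σ ℤ) :
    f.compLeft ι ∘ (fun x j => MvPolynomial.aeval x (φ j)) =
      (fun x j => MvPolynomial.aeval x (φ j)) ∘ f.compLeft σ :=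
  funext fun x => funext fun j => MvPolynomial.comp_aeval_apply x f.toIntAlgHom (φ j)

theorem natCast_mul_inv_pow_le {q : ℕ} (hq : 0 < q) {N k n m : ℕ} {C : ℝ}
    (h : (N : ℝ) ≤ C * (q : ℝ) ^ ((k : ℤ) * ((n : ℤ) - (m : ℤ)))) :
    (N : ℝ≥0∞) * ((q : ℝ≥0∞) ^ (k * n))⁻¹ ≤ ENNReal.ofReal C * ((q : ℝ≥0∞) ^ (k * m))⁻¹ := by
  have hq' : (0 : ℝ) < q := by exact_mod_cast hq
  have key : (N : ℝ) * ((q : ℝ) ^ (k * n))⁻¹ ≤ C * ((q : ℝ) ^ (k * m))⁻¹ := by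
    rw [mul_inv_le_iff₀ (by positivity), mul_assoc, ← zpow_natCast, ← zpow_natCast, ← zpow_neg,
      ← zpow_add₀ hq'.ne']
    refine h.trans_eq ?_
    congr 2
    push_cast
    ring
  convert ENNReal.ofReal_le_ofReal key using 1
  · rw [ENNReal.ofReal_mul (by positivity), ofReal_natCast, ofReal_inv_of_pos (by positivity),
      ofReal_pow hq'.le, ofReal_natCast]
  · rw [ENNReal.ofReal_mul' (by positivity), ofReal_inv_of_pos (by positivity),
      ofReal_pow hq'.le, ofReal_natCast]

namespace PadicInt

variable {p : ℕ} [Fact p.Prime] {ι : Type*}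

theorem toZModPow_surjective (k : ℕ) :
    Function.Surjective (toZModPow k : ℤ_[p] → ZMod (p ^ k)) := fun y =>
  let ⟨n, hn⟩ := ZMod.intCast_surjective y
  ⟨n, by simp [hn]⟩

theorem compLeft_toZModPow_surjective (k : ℕ) :
    Function.Surjective ((toZModPow k).compLeft ι : (ι → ℤ_[p]) → ι → ZMod (p ^ k)) :=
  (toZModPow_surjective k).comp_left

variable [Fintype ι]

theorem compLeft_toZModPow_eq_iff {k : ℕ} {w z : ι → ℤ_[p]} :
    (toZModPow k).compLeft ι w = (toZModPow k).compLeft ι z ↔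
      dist w z ≤ (p : ℝ) ^ (-(k : ℤ)) := by
  rw [dist_pi_le_iff (by positivity), funext_iff]
  refine forall_congr' fun i => ?_
  rw [dist_eq_norm, norm_le_pow_iff_mem_span_pow, ← ker_toZModPow, RingHom.mem_ker, map_sub,
    sub_eq_zero]
  rfl

theorem preimage_compLeft_toZModPow_singleton (k : ℕ) (z : ι → ℤ_[p]) :
    (toZModPow k).compLeft ι ⁻¹' {(toZModPow k).compLeft ι z} =
      Metric.closedBall z ((p : ℝ) ^ (-(k : ℤ))) := by
  ext w
  exact compLeft_toZModPow_eq_iff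

theorem measurableSet_preimage_compLeft_toZModPow_singleton (k : ℕ) (y : ι → ZMod (p ^ k)) :
    MeasurableSet ((toZModPow k).compLeft ι ⁻¹' {y}) := by
  obtain ⟨z, rfl⟩ := compLeft_toZModPow_surjective k y
  rw [preimage_compLeft_toZModPow_singleton]
  exact Metric.isClosed_closedBall.measurableSet

theorem measure_preimage_compLeft_toZModPow_singleton (μ : Measure (ι → ℤ_[p]))
    [μ.IsAddHaarMeasure] [IsProbabilityMeasure μ] (k : ℕ) (y : ι → ZMod (p ^ k)) :
    μ ((toZModPow k).compLeft ι ⁻¹' {y}) = ((p : ℝ≥0∞) ^ (k * Fintype.card ι))⁻¹ := by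
  have hker : MeasurableSet
      (((toZModPow (p := p) k).compLeft ι).toAddMonoidHom.ker : Set (ι → ℤ_[p])) := by
    rw [AddMonoidHom.coe_ker]
    exact measurableSet_preimage_compLeft_toZModPow_singleton k 0
  have hcard : Nat.card (ι → ZMod (p ^ k)) = p ^ (k * Fintype.card ι) := by
    rw [Nat.card_fun, Nat.card_zmod, Nat.card_eq_fintype_card, pow_mul]
  have h := AddMonoidHom.card_mul_measure_preimage_singleton
    (compLeft_toZModPow_surjective k) hker μ y
  rw [measure_univ, hcard, mul_comm] at h
  push_cast at h
  exact ENNReal.eq_inv_of_mul_eq_one_left h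

theorem measure_le_mul_of_preimage_compLeft_toZModPow_le {ν μ : Measure (ι → ℤ_[p])}
    {c : ℝ≥0∞} (h : ∀ k, 1 ≤ k → ∀ y : ι → ZMod (p ^ k),
      ν ((toZModPow k).compLeft ι ⁻¹' {y}) ≤ c * μ ((toZModPow k).compLeft ι ⁻¹' {y}))
    {U : Set (ι → ℤ_[p])} (hU : IsOpen U) : ν U ≤ c * μ U := by
  have hp : (1 : ℝ) < p := by exact_mod_cast (Fact.out : p.Prime).one_lt
  set S : ℕ → Set (ι → ℤ_[p]) :=
    fun k => {z | Metric.closedBall z ((p : ℝ) ^ (-(k + 1 : ℤ))) ⊆ U}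
  have hS : ∀ k, S k = (toZModPow (k + 1)).compLeft ι ⁻¹'
      {y | (toZModPow (k + 1)).compLeft ι ⁻¹' {y} ⊆ U} := by
    intro k
    ext z
    simp [S, preimage_compLeft_toZModPow_singleton]
  have hmono : Monotone S := fun k l hkl z hz =>
    (Metric.closedBall_subset_closedBall (zpow_le_zpow_right₀ hp.le (by omega))).trans hz
  have hunion : ⋃ k, S k = U := by
    refine Set.Subset.antisymm (Set.iUnion_subset fun k z hz =>
      hz (Metric.mem_closedBall_self (by positivity))) fun z hz => ?_
    obtain ⟨ε, hε, hball⟩ := Metric.isOpen_iff.1 hU z hz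
    obtain ⟨k, hk⟩ := exists_pow_lt_of_lt_one hε (inv_lt_one_of_one_lt₀ hp)
    refine Set.mem_iUnion.2 ⟨k, (Metric.closedBall_subset_ball ?_).trans hball⟩
    calc (p : ℝ) ^ (-(k + 1 : ℤ)) ≤ (p : ℝ) ^ (-(k : ℤ)) := zpow_le_zpow_right₀ hp.le (by omega)
      _ = (p : ℝ)⁻¹ ^ k := by rw [zpow_neg, zpow_natCast, inv_pow]
      _ < ε := hk
  calc ν U = ⨆ k, ν (S k) := by rw [← hunion, hmono.measure_iUnion]
    _ ≤ ⨆ k, c * μ (S k) := iSup_mono fun k => by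
      rw [hS]
      exact measure_preimage_le_mul_of_forall_singleton ν μ
        (measurableSet_preimage_compLeft_toZModPow_singleton _) (h (k + 1) (by omega)) _
    _ = c * μ U := by rw [← ENNReal.mul_iSup, ← hmono.measure_iUnion, hunion]

end PadicInt

open PadicInt in
theorem stmt10_general (p : ℕ) [Fact p.Prime] (n m : ℕ)
    (φ : Fin m → MvPolynomial (Fin n) ℤ)
    -- the induced polynomial map Φ : ℤ_p^n → ℤ_p^m
    (Φ : (Fin n → PadicInt p) → (Fin m → PadicInt p))
    (hΦ : ∀ x j, Φ x j = MvPolynomial.aeval x (φ j))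
    -- the Haar probability measures on ℤ_p^n and ℤ_p^m
    (μn : Measure (Fin n → PadicInt p)) [μn.IsAddHaarMeasure] [IsProbabilityMeasure μn]
    (μm : Measure (Fin m → PadicInt p)) [μm.IsAddHaarMeasure] [IsProbabilityMeasure μm]
    -- the uniform bound on fiber counts over ℤ/p^kℤ
    (C : ℝ)
    (hcount : ∀ (k : ℕ), 1 ≤ k → ∀ y : Fin m → ZMod (p ^ k),
      (Nat.card {x : Fin n → ZMod (p ^ k) //
          (fun j => MvPolynomial.aeval x (φ j)) = y} : ℝ)
        ≤ C * (p : ℝ) ^ ((k : ℤ) * ((n : ℤ) - (m : ℤ)))) :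
    ∀ A : Set (Fin m → PadicInt p), MeasurableSet A →
      Measure.map Φ μn A ≤ ENNReal.ofReal C * μm A := by
  obtain rfl : Φ = fun x j => MvPolynomial.aeval x (φ j) := funext fun x => funext (hΦ x)
  have hΦ_meas : Measurable fun (x : Fin n → ℤ_[p]) j => MvPolynomial.aeval x (φ j) :=
    (continuous_pi fun j => MvPolynomial.continuous_aeval (φ j)).measurable
  have := Measure.OuterRegular.smul μm (ENNReal.ofReal_ne_top (r := C))
  intro A _
  refine Measure.le_of_forall_isOpen_le (ρ := ENNReal.ofReal C • μm) (fun U hU => ?_) A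
  refine measure_le_mul_of_preimage_compLeft_toZModPow_le (fun k hk y => ?_) hU
  rw [Measure.map_apply hΦ_meas (measurableSet_preimage_compLeft_toZModPow_singleton k y),
    ← Set.preimage_comp, RingHom.compLeft_comp_aeval, Set.preimage_comp,
    measure_preimage_eq_card_mul μn (measurableSet_preimage_compLeft_toZModPow_singleton k)
      (measure_preimage_compLeft_toZModPow_singleton μn k),
    measure_preimage_compLeft_toZModPow_singleton μm, Fintype.card_fin, Fintype.card_fin]
  exact natCast_mul_inv_pow_le (Fact.out : p.Prime).pos (hcount k hk y)

theorem stmt10 (p : ℕ) [Fact p.Prime] (n m : ℕ) (hn : 1 ≤ n) (hm : 1 ≤ m)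
    (φ : Fin m → MvPolynomial (Fin n) ℤ)
    -- the induced polynomial map Φ : ℤ_p^n → ℤ_p^m
    (Φ : (Fin n → PadicInt p) → (Fin m → PadicInt p))
    (hΦ : ∀ x j, Φ x j = MvPolynomial.aeval x (φ j))
    -- the Haar probability measures on ℤ_p^n and ℤ_p^m
    (μn : Measure (Fin n → PadicInt p)) [μn.IsAddHaarMeasure] [IsProbabilityMeasure μn]
    (μm : Measure (Fin m → PadicInt p)) [μm.IsAddHaarMeasure] [IsProbabilityMeasure μm]
    -- the uniform bound on fiber counts over ℤ/p^kℤ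
    (C : ℝ) (hC : 0 < C)
    (hcount : ∀ (k : ℕ), 1 ≤ k → ∀ y : Fin m → ZMod (p ^ k),
      (Nat.card {x : Fin n → ZMod (p ^ k) //
          (fun j => MvPolynomial.aeval x (φ j)) = y} : ℝ)
        ≤ C * (p : ℝ) ^ ((k : ℤ) * ((n : ℤ) - (m : ℤ)))) :
    ∀ A : Set (Fin m → PadicInt p), MeasurableSet A →
      Measure.map Φ μn A ≤ ENNReal.ofReal C * μm A :=
  stmt10_general p n m φ Φ hΦ μn μm C hcount
end
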